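/- arXiv:1404.5023 — 6 statements merged into one kernel-verified Lean document; each statement's English description precedes it below -/
import Mathlib

section
/- Let (g,B) be a quadratic Lie algebra. The map T sending a skew-symmetric derivation D of g to the alternating bilinear form Ω_D defined by Ω_D(X,Y) = B(D(X),Y) is a linear bijection from Der_a(g) onto the space Z²(g,ℂ) of 2-cocycles of g with trivial coefficients. -/
open Module

/-- The space of 2-cocycles (trivial coefficients): alternating bilinear forms satisfying
the cocycle identity. -/
noncomputable def twoCocycles (g : Type) [LieRing g] [LieAlgebra ℂ g] :
    Submodule ℂ (g →ₗ[ℂ] g →ₗ[ℂ] ℂ) where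
  carrier := {Ω | (∀ x, Ω x x = 0) ∧
    ∀ x y z, Ω ⁅x, y⁆ z + Ω ⁅y, z⁆ x + Ω ⁅z, x⁆ y = 0}
  add_mem' := by
    rintro a b ⟨ha1, ha2⟩ ⟨hb1, hb2⟩
    refine ⟨fun x => ?_, fun x y z => ?_⟩
    · simp [ha1 x, hb1 x]
    · simp only [LinearMap.add_apply]
      linear_combination ha2 x y z + hb2 x y z
  smul_mem' := by
    rintro c a ⟨ha1, ha2⟩
    refine ⟨fun x => ?_, fun x y z => ?_⟩
    · simp [ha1 x]
    · simp only [LinearMap.smul_apply, smul_eq_mul]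
      linear_combination c * ha2 x y z
  zero_mem' := ⟨fun x => rfl, fun x y z => by simp⟩

/-- Skew-symmetric derivations of a quadratic Lie algebra `(g, B)`. -/
noncomputable def skewDer (g : Type) [LieRing g] [LieAlgebra ℂ g]
    (B : g →ₗ[ℂ] g →ₗ[ℂ] ℂ) : Submodule ℂ (Module.End ℂ g) where
  carrier := {D | (∀ x y, D ⁅x, y⁆ = ⁅D x, y⁆ + ⁅x, D y⁆) ∧
    ∀ x y, B (D x) y = - B x (D y)}
  add_mem' := by
    rintro a b ⟨ha1, ha2⟩ ⟨hb1, hb2⟩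
    refine ⟨fun x y => ?_, fun x y => ?_⟩
    · simp only [LinearMap.add_apply, ha1 x y, hb1 x y, add_lie, lie_add]
      abel
    · simp only [LinearMap.add_apply, map_add, ha2 x y, hb2 x y]
      ring
  smul_mem' := by
    rintro c a ⟨ha1, ha2⟩
    refine ⟨fun x y => ?_, fun x y => ?_⟩
    · simp [LinearMap.smul_apply, ha1 x y, smul_add, lie_smul, smul_lie]
    · simp only [LinearMap.smul_apply, map_smul, ha2 x y, smul_eq_mul]
      ring
  zero_mem' := ⟨fun x y => by simp, fun x y => by simp⟩

/-!
Nondegeneracy of `B` identifies `End g` with the bilinear forms on `g` via `D ↦ B (D ·) ·`.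
Under this identification skew-symmetry of `D` becomes alternation of `Ω_D`, and for skew `D`
the cyclic sum `Ω_D([x,y],z) + Ω_D([y,z],x) + Ω_D([z,x],y)` equals
`B (D[x,y] - [Dx,y] - [x,Dy]) z` by invariance; so, again by nondegeneracy, `D` is a derivation
exactly when `Ω_D` is a cocycle.
-/

section InvariantForm

variable {R L : Type*} [CommRing R] [LieRing L] [LieAlgebra R L] {B : L →ₗ[R] L →ₗ[R] R}

theorem invariantForm_lie_rotate (hsym : ∀ x y, B x y = B y x)
    (hinv : ∀ x y z, B ⁅x, y⁆ z = B x ⁅y, z⁆) (x y z : L) :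
    B x ⁅y, z⁆ = B y ⁅z, x⁆ := by
  rw [← hinv y z x, hsym]

theorem form_derivation_defect_eq_cyclic_sum (hsym : ∀ x y, B x y = B y x)
    (hinv : ∀ x y z, B ⁅x, y⁆ z = B x ⁅y, z⁆) {D : Module.End R L}
    (hskew : ∀ x y, B (D x) y = -B x (D y)) (x y z : L) :
    B (D ⁅x, y⁆ - (⁅D x, y⁆ + ⁅x, D y⁆)) z =
      B (D ⁅x, y⁆) z + B (D ⁅y, z⁆) x + B (D ⁅z, x⁆) y := by
  have h₁ : B ⁅D x, y⁆ z = -B (D ⁅y, z⁆) x := by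
    rw [hinv, hskew, hsym x]
  have h₂ : B ⁅x, D y⁆ z = -B (D ⁅z, x⁆) y := by
    rw [hinv, invariantForm_lie_rotate hsym hinv, hskew, hsym y]
  simp only [map_sub, map_add, LinearMap.sub_apply, LinearMap.add_apply, h₁, h₂]
  ring

theorem isDerivation_iff_cocycle_of_skew (hsym : ∀ x y, B x y = B y x)
    (hinv : ∀ x y z, B ⁅x, y⁆ z = B x ⁅y, z⁆) (hnd : ∀ x, (∀ y, B x y = 0) → x = 0)
    {D : Module.End R L} (hskew : ∀ x y, B (D x) y = -B x (D y)) :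
    (∀ x y, D ⁅x, y⁆ = ⁅D x, y⁆ + ⁅x, D y⁆) ↔
      ∀ x y z, B (D ⁅x, y⁆) z + B (D ⁅y, z⁆) x + B (D ⁅z, x⁆) y = 0 := by
  simp_rw [← form_derivation_defect_eq_cyclic_sum hsym hinv hskew]
  constructor
  · intro hder x y z
    rw [hder, sub_self, map_zero, LinearMap.zero_apply]
  · intro hcoc x y
    exact sub_eq_zero.mp (hnd _ (hcoc x y))

theorem skew_iff_isAlt_comp [NoZeroDivisors R] [CharZero R] (hsym : ∀ x y, B x y = B y x)
    {D : Module.End R L} :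
    (∀ x y, B (D x) y = -B x (D y)) ↔ (B ∘ₗ D).IsAlt := by
  simp [LinearMap.isAlt_iff_eq_neg_flip, LinearMap.ext_iff₂, hsym _ (D _)]

end InvariantForm

theorem mem_skewDer_iff_comp_mem_twoCocycles {g : Type} [LieRing g] [LieAlgebra ℂ g]
    {B : g →ₗ[ℂ] g →ₗ[ℂ] ℂ} (hsym : ∀ x y, B x y = B y x)
    (hinv : ∀ x y z, B ⁅x, y⁆ z = B x ⁅y, z⁆) (hnd : ∀ x, (∀ y, B x y = 0) → x = 0)
    (D : Module.End ℂ g) :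
    D ∈ skewDer g B ↔ B ∘ₗ D ∈ twoCocycles g := by
  change (_ ∧ _) ↔ (B ∘ₗ D).IsAlt ∧ _
  rw [← skew_iff_isAlt_comp hsym, and_comm]
  exact and_congr_right fun hskew => isDerivation_iff_cocycle_of_skew hsym hinv hnd hskew

/-- For a quadratic Lie algebra `(g, B)`, the map `T` sending a
skew-symmetric derivation `D` to the alternating bilinear form
`Ω_D (X, Y) = B (D X) Y` is a linear bijection from `Der_a(g)` onto `Z²(g, ℂ)`. -/
theorem skewDer_equiv_twoCocycles (g : Type) [LieRing g] [LieAlgebra ℂ g]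
    [FiniteDimensional ℂ g] (B : g →ₗ[ℂ] g →ₗ[ℂ] ℂ)
    (hsym : ∀ x y, B x y = B y x)
    (hinv : ∀ x y z, B ⁅x, y⁆ z = B x ⁅y, z⁆)
    (hnd : ∀ x, (∀ y, B x y = 0) → x = 0) :
    ∃ T : skewDer g B ≃ₗ[ℂ] twoCocycles g,
      ∀ (D : skewDer g B) (x y : g),
        ((T D : g →ₗ[ℂ] g →ₗ[ℂ] ℂ)) x y = B ((D : Module.End ℂ g) x) y := by
  have hB : LinearMap.BilinForm.Nondegenerate B :=
    ⟨hnd, fun y hy => hnd y fun x => hsym y x ▸ hy x⟩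
  let e : Module.End ℂ g ≃ₗ[ℂ] (g →ₗ[ℂ] g →ₗ[ℂ] ℂ) :=
    (LinearMap.BilinForm.toDual B hB).congrRight
  have he : ∀ D, e D = B ∘ₗ D := fun _ => rfl
  have hmap : (skewDer g B).map (e : Module.End ℂ g →ₗ[ℂ] _) = twoCocycles g := by
    ext Ω
    rw [Submodule.mem_map_equiv, mem_skewDer_iff_comp_mem_twoCocycles hsym hinv hnd, ← he,
      e.apply_symm_apply]
  exact ⟨e.ofSubmodules _ _ hmap, fun _ _ _ => rfl⟩
end

section
/- Let (g,B,ω) be a finite-dimensional symplectic quadratic Lie algebra and let φ : g → g* be the linear isomorphism φ(X) = B(X,·). Then the assignment ad(X) ↦ ad(φ⁻¹(ω(X,·))) yields a well-defined linear map 𝒟 : ad(g) → ad(g) (i.e. ad(X) = ad(X′) implies ad(φ⁻¹(ω(X,·))) = ad(φ⁻¹(ω(X′,·)))), and 𝒟 is a bijective derivation of the Lie algebra ad(g), i.e. 𝒟([u,v]) = [𝒟(u),v] + [u,𝒟(v)] for all u,v ∈ ad(g) and 𝒟 is invertible. -/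
attribute [local instance 100] LieRing.ofAssociativeRing

/-!
Since `B` is nondegenerate, `ω x = B (δ x)` for a unique linear `δ : g → g`, the paper's
`φ⁻¹ ∘ ω`. Invariance of `B` and the cocycle identity for `ω` make `δ` a derivation of `g`, and
it is invertible because `ω` is nondegenerate. Any derivation `δ` normalizes the inner
derivations, `⁅δ, ad x⁆ = ad (δ x)`, so the commutator with `δ` is a derivation of `ad(g)`
sending `ad X` to `ad (δ X)`; this is the well-defined map `𝒟`. It is onto because `δ` is,
hence bijective.
-/

namespace LieSubalgebra

variable {R A : Type*} [CommRing R] [LieRing A] [LieAlgebra R A]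

def restrictAd (K : LieSubalgebra R A) (x : A) (hx : ∀ y ∈ K, ⁅x, y⁆ ∈ K) :
    LieDerivation R K K where
  toLinearMap := (LieAlgebra.ad R A x).restrict fun y hy ↦ hx y hy
  leibniz' a b := Subtype.ext <| by
    change ⁅x, ⁅(a : A), (b : A)⁆⁆ = ⁅(a : A), ⁅x, (b : A)⁆⁆ - ⁅(b : A), ⁅x, (a : A)⁆⁆
    rw [leibniz_lie, ← lie_skew (b : A)]
    abel

end LieSubalgebra

namespace LinearMap.BilinForm

variable {R L : Type*} [CommRing R] [LieRing L] [LieAlgebra R L] {B ω : LinearMap.BilinForm R L}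

lemma leibniz_of_apply_eq (hB : B.SeparatingLeft) (hBinv : ∀ x y z, B ⁅x, y⁆ z = B x ⁅y, z⁆)
    (hω : ω.IsAlt) (hωcocycle : ∀ x y z, ω ⁅x, y⁆ z + ω ⁅y, z⁆ x + ω ⁅z, x⁆ y = 0)
    {δ : L →ₗ[R] L} (hδ : ∀ x z, B (δ x) z = ω x z) (a b : L) :
    δ ⁅a, b⁆ = ⁅a, δ b⁆ - ⁅b, δ a⁆ := by
  have hlie (x y z : L) : B ⁅x, δ y⁆ z = ω ⁅x, z⁆ y := by
    rw [← lie_skew, map_neg, LinearMap.neg_apply, hBinv, hδ, ← hω.neg_eq, neg_neg]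
  refine sub_eq_zero.mp (hB _ fun z ↦ ?_)
  rw [map_sub, map_sub, LinearMap.sub_apply, LinearMap.sub_apply, hδ, hlie, hlie,
    ← lie_skew a z, map_neg, LinearMap.neg_apply]
  linear_combination hωcocycle a b z

end LinearMap.BilinForm

namespace LieDerivation

variable {R L : Type*} [CommRing R] [LieRing L] [LieAlgebra R L]

lemma lie_toLinearMap_ad (D : LieDerivation R L L) (x : L) :
    ⁅(D : Module.End R L), LieAlgebra.ad R L x⁆ = LieAlgebra.ad R L (D x) := by
  rw [← coe_ad_apply_eq_ad_apply, ← coe_ad_apply_eq_ad_apply, ← lie_der_ad_eq_ad_der]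
  rfl

lemma ad_apply_eq_of_ad_eq (D : LieDerivation R L L) {x y : L}
    (h : LieAlgebra.ad R L x = LieAlgebra.ad R L y) :
    LieAlgebra.ad R L (D x) = LieAlgebra.ad R L (D y) := by
  rw [← lie_toLinearMap_ad, h, lie_toLinearMap_ad]

noncomputable def onRangeAd (D : LieDerivation R L L) :
    LieDerivation R (LieAlgebra.ad R L).range (LieAlgebra.ad R L).range :=
  (LieAlgebra.ad R L).range.restrictAd (D : Module.End R L) <| by
    rintro _ ⟨x, rfl⟩
    exact ⟨D x, (D.lie_toLinearMap_ad x).symm⟩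

lemma onRangeAd_apply_ad (D : LieDerivation R L L) (x : L) :
    D.onRangeAd ⟨LieAlgebra.ad R L x, x, rfl⟩ = ⟨LieAlgebra.ad R L (D x), D x, rfl⟩ :=
  Subtype.ext (D.lie_toLinearMap_ad x)

lemma onRangeAd_surjective {D : LieDerivation R L L} (hD : Function.Surjective D) :
    Function.Surjective D.onRangeAd := by
  rintro ⟨_, y, rfl⟩
  obtain ⟨x, rfl⟩ := hD y
  exact ⟨⟨LieAlgebra.ad R L x, x, rfl⟩, D.onRangeAd_apply_ad x⟩

end LieDerivation

namespace LinearMap.BilinForm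

variable {K L : Type*} [Field K] [LieRing L] [LieAlgebra K L] [FiniteDimensional K L]
  {B ω : LinearMap.BilinForm K L} (hB : B.SeparatingLeft)
  (hBinv : ∀ x y z, B ⁅x, y⁆ z = B x ⁅y, z⁆) (hω : ω.IsAlt)
  (hωcocycle : ∀ x y z, ω ⁅x, y⁆ z + ω ⁅y, z⁆ x + ω ⁅z, x⁆ y = 0)

noncomputable def symplecticDerivation : LieDerivation K L L where
  toLinearMap := (B.toDual (.ofSeparatingLeft hB)).symm ∘ₗ ω
  leibniz' := leibniz_of_apply_eq hB hBinv hω hωcocycle fun x z ↦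
    apply_toDual_symm_apply (hB := .ofSeparatingLeft hB) (ω x) z

lemma apply_symplecticDerivation (x z : L) :
    B (symplecticDerivation hB hBinv hω hωcocycle x) z = ω x z :=
  apply_toDual_symm_apply (hB := .ofSeparatingLeft hB) (ω x) z

lemma eq_symplecticDerivation_of_apply_eq {x y : L} (hy : ∀ z, B y z = ω x z) :
    y = symplecticDerivation hB hBinv hω hωcocycle x :=
  sub_eq_zero.mp <| hB _ fun z ↦ by
    rw [map_sub, LinearMap.sub_apply, hy, apply_symplecticDerivation, sub_self]

lemma symplecticDerivation_bijective (hωnd : ω.SeparatingLeft) :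
    Function.Bijective (symplecticDerivation hB hBinv hω hωcocycle) := by
  have hinj : Function.Injective (symplecticDerivation hB hBinv hω hωcocycle) :=
    (injective_iff_map_eq_zero _).mpr fun x hx ↦ hωnd x fun z ↦ by
      rw [← apply_symplecticDerivation hB hBinv hω hωcocycle, hx, map_zero, LinearMap.zero_apply]
  exact ⟨hinj, LinearMap.injective_iff_surjective.mp hinj⟩

end LinearMap.BilinForm

theorem symplectic_quadratic_ad_invertible_derivation_general
    (g : Type) [LieRing g] [LieAlgebra ℂ g] [FiniteDimensional ℂ g]
    (B : g →ₗ[ℂ] g →ₗ[ℂ] ℂ)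
    (hBinv : ∀ x y z, B ⁅x, y⁆ z = B x ⁅y, z⁆)
    (hBnd : ∀ x, (∀ y, B x y = 0) → x = 0)
    (ω : g →ₗ[ℂ] g →ₗ[ℂ] ℂ)
    (hωalt : ∀ x, ω x x = 0)
    (hωnd : ∀ x, (∀ y, ω x y = 0) → x = 0)
    (hωcocycle : ∀ x y z, ω ⁅x, y⁆ z + ω ⁅y, z⁆ x + ω ⁅z, x⁆ y = 0) :
    -- well-definedness of the assignment
    (∀ X X' Y Y' : g, LieAlgebra.ad ℂ g X = LieAlgebra.ad ℂ g X' →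
      (∀ z, B Y z = ω X z) → (∀ z, B Y' z = ω X' z) →
      LieAlgebra.ad ℂ g Y = LieAlgebra.ad ℂ g Y') ∧
    -- the resulting linear map `𝒟` is an invertible derivation of `ad(g)`
    ∃ D : (LieAlgebra.ad ℂ g).range →ₗ[ℂ] (LieAlgebra.ad ℂ g).range,
      (∀ X Y : g, (∀ z, B Y z = ω X z) →
        D ⟨LieAlgebra.ad ℂ g X, X, rfl⟩ = ⟨LieAlgebra.ad ℂ g Y, Y, rfl⟩) ∧
      (∀ u v : (LieAlgebra.ad ℂ g).range, D ⁅u, v⁆ = ⁅D u, v⁆ + ⁅u, D v⁆) ∧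
      Function.Bijective D := by
  set δ := LinearMap.BilinForm.symplecticDerivation hBnd hBinv hωalt hωcocycle
  have hδ {X Y : g} (hY : ∀ z, B Y z = ω X z) : Y = δ X :=
    LinearMap.BilinForm.eq_symplecticDerivation_of_apply_eq hBnd hBinv hωalt hωcocycle hY
  refine ⟨fun X X' Y Y' hX hY hY' ↦ hδ hY ▸ hδ hY' ▸ δ.ad_apply_eq_of_ad_eq hX,
    δ.onRangeAd, fun X Y hY ↦ hδ hY ▸ δ.onRangeAd_apply_ad X,
    fun u v ↦ (δ.onRangeAd.apply_lie_eq_add u v).trans (add_comm _ _), ?_⟩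
  have hsurj := LieDerivation.onRangeAd_surjective
    (LinearMap.BilinForm.symplecticDerivation_bijective hBnd hBinv hωalt hωcocycle hωnd).2
  exact ⟨LinearMap.injective_iff_surjective.mpr hsurj, hsurj⟩

/-- For a finite-dimensional symplectic quadratic Lie algebra `(g, B, ω)`,
the assignment `ad X ↦ ad (φ⁻¹ (ω (X, ·)))`, where `φ(X) = B(X, ·)`, is well defined and
yields a linear map `𝒟` on the Lie algebra `ad(g)` of inner derivations which is a
bijective derivation. -/
theorem symplectic_quadratic_ad_invertible_derivation
    (g : Type) [LieRing g] [LieAlgebra ℂ g] [FiniteDimensional ℂ g]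
    (B : g →ₗ[ℂ] g →ₗ[ℂ] ℂ)
    (hBsym : ∀ x y, B x y = B y x)
    (hBinv : ∀ x y z, B ⁅x, y⁆ z = B x ⁅y, z⁆)
    (hBnd : ∀ x, (∀ y, B x y = 0) → x = 0)
    (ω : g →ₗ[ℂ] g →ₗ[ℂ] ℂ)
    (hωalt : ∀ x, ω x x = 0)
    (hωnd : ∀ x, (∀ y, ω x y = 0) → x = 0)
    (hωcocycle : ∀ x y z, ω ⁅x, y⁆ z + ω ⁅y, z⁆ x + ω ⁅z, x⁆ y = 0) :
    -- well-definedness of the assignment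
    (∀ X X' Y Y' : g, LieAlgebra.ad ℂ g X = LieAlgebra.ad ℂ g X' →
      (∀ z, B Y z = ω X z) → (∀ z, B Y' z = ω X' z) →
      LieAlgebra.ad ℂ g Y = LieAlgebra.ad ℂ g Y') ∧
    -- the resulting linear map `𝒟` is an invertible derivation of `ad(g)`
    ∃ D : (LieAlgebra.ad ℂ g).range →ₗ[ℂ] (LieAlgebra.ad ℂ g).range,
      (∀ X Y : g, (∀ z, B Y z = ω X z) →
        D ⟨LieAlgebra.ad ℂ g X, X, rfl⟩ = ⟨LieAlgebra.ad ℂ g Y, Y, rfl⟩) ∧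
      (∀ u v : (LieAlgebra.ad ℂ g).range, D ⁅u, v⁆ = ⁅D u, v⁆ + ⁅u, D v⁆) ∧
      Function.Bijective D :=
  symplectic_quadratic_ad_invertible_derivation_general g B hBinv hBnd ω hωalt hωnd hωcocycle
end

section
/- For every p ≥ 2, (j_{2p}, B̄) is a quadratic Lie algebra (B̄ is symmetric, invariant and nondegenerate), and the alternating bilinear form ω determined on basis vectors by ω(X_0,Y_0) = 1 and ω(X_i,Y_i) = i for 1 ≤ i ≤ p (all other values on pairs of basis vectors, up to antisymmetry, being zero) is a symplectic structure on j_{2p}; hence (j_{2p},B̄,ω) is a symplectic quadratic Lie algebra. -/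
/-!
Each identity to be proved is linear in every argument, so it suffices to check it on the basis
vectors `X i`, `Y i`, using the explicit bracket table. Both forms pair `X i` with `Y i` only,
with nonzero coefficients, which gives nondegeneracy. In the cocycle identity the only basis
triples with nonzero terms are the permutations of `(X (k+1), Y 0, Y k)` with `1 ≤ k < p`, for
which it reads `ω(X_{k+1}, Y_{k+1}) = ω(X_k, Y_k) + ω(X_0, Y_0)`, i.e. `k + 1 = k + 1`.
-/

open LieAlgebra

section

variable {R L ι : Type*} [CommRing R] [LieRing L] [LieAlgebra R L]

theorem LinearMap.BilinForm.lieInvariant_of_basis (b : Module.Basis ι R L)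
    {B : LinearMap.BilinForm R L} (h : ∀ i j k, B ⁅b i, b j⁆ (b k) = -B (b j) ⁅b i, b k⁆) :
    B.lieInvariant L := by
  rw [LinearMap.BilinForm.lieInvariant_iff, LieModule.mem_maxTrivSubmodule]
  suffices (LieModule.toEnd R L (LinearMap.BilinForm R L) : L →ₗ[R] Module.End R _).flip B = 0 by
    intro x
    simpa using LinearMap.congr_fun this x
  refine b.ext fun i => LinearMap.ext_basis b b fun j k => ?_
  simp [h, Module.Dual.lie_apply]

def LinearMap.cyclicLieSum (ω : L →ₗ[R] L →ₗ[R] R) : L →ₗ[R] L →ₗ[R] L →ₗ[R] R :=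
  LinearMap.mk₂ R (fun x y => ω ⁅x, y⁆ + ω.flip x ∘ₗ ad R L y - ω.flip y ∘ₗ ad R L x)
    (fun x x' y => by ext z; simp [add_lie]; ring)
    (fun c x y => by ext z; simp [smul_lie]; ring)
    (fun x y y' => by ext z; simp [lie_add]; ring)
    (fun c x y => by ext z; simp [lie_smul]; ring)

theorem LinearMap.cyclicLieSum_apply (ω : L →ₗ[R] L →ₗ[R] R) (x y z : L) :
    ω.cyclicLieSum x y z = ω ⁅x, y⁆ z + ω ⁅y, z⁆ x + ω ⁅z, x⁆ y := by
  simp only [cyclicLieSum, mk₂_apply, add_apply, comp_apply, flip_apply, ad_apply,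
    ← lie_skew z x, map_neg, neg_apply, sub_eq_add_neg]

theorem LinearMap.cyclic_lie_sum_eq_zero_of_basis (b : Module.Basis ι R L)
    {ω : L →ₗ[R] L →ₗ[R] R}
    (h : ∀ i j k, ω ⁅b i, b j⁆ (b k) + ω ⁅b j, b k⁆ (b i) + ω ⁅b k, b i⁆ (b j) = 0)
    (x y z : L) : ω ⁅x, y⁆ z + ω ⁅y, z⁆ x + ω ⁅z, x⁆ y = 0 := by
  have hω : ω.cyclicLieSum = 0 := b.ext fun i => LinearMap.ext_basis b b fun j k => by
    simpa [cyclicLieSum_apply] using h i j k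
  simpa [cyclicLieSum_apply] using LinearMap.congr_fun₂ (LinearMap.congr_fun hω x) y z

end

theorem LinearMap.separatingLeft_of_basis_pairing {R M ι : Type*} [CommRing R]
    [NoZeroDivisors R] [AddCommGroup M] [Module R M] [DecidableEq ι] (b : Module.Basis ι R M)
    (B : M →ₗ[R] M →ₗ[R] R) (v : ι → M) (c : ι → R) (hc : ∀ i, c i ≠ 0)
    (hB : ∀ i j, B (b i) (v j) = if i = j then c i else 0) : B.SeparatingLeft := by
  intro x hx
  refine b.ext_elem fun i => ?_
  have hpair : B.flip (v i) = c i • b.coord i := b.ext fun j => by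
    simp +contextual [hB, Finsupp.single_apply]
  simpa [hx, hc i] using (LinearMap.congr_fun hpair x).symm

section
variable {L : Type*} [LieRing L]

structure JordanTypeRelations (p : ℕ) (X Y : Fin (p + 1) → L) : Prop where
  lie_Y_zero_X : ∀ i : Fin (p + 1), 2 ≤ (i : ℕ) → ⁅Y 0, X i⁆ = X ⟨i - 1, by omega⟩
  lie_Y_zero_Y : ∀ i : Fin (p + 1), i ≠ 0 → ∀ _ : (i : ℕ) < p, ⁅Y 0, Y i⁆ = -Y ⟨i + 1, by omega⟩
  lie_X_succ_Y : ∀ i : Fin (p + 1), i ≠ 0 → ∀ _ : (i : ℕ) < p, ⁅X ⟨i + 1, by omega⟩, Y i⁆ = X 0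
  lie_X_X : ∀ i j, ⁅X i, X j⁆ = 0
  lie_Y_zero_X_zero : ⁅Y 0, X 0⁆ = 0
  lie_Y_zero_X_one : ⁅Y 0, X 1⁆ = 0
  lie_Y_zero_Y_last : ⁅Y 0, Y (Fin.last p)⁆ = 0
  lie_Y_Y : ∀ i j : Fin (p + 1), i ≠ 0 → j ≠ 0 → ⁅Y i, Y j⁆ = 0
  lie_X_Y : ∀ i j : Fin (p + 1), j ≠ 0 → (i : ℕ) ≠ j + 1 → ⁅X i, Y j⁆ = 0

namespace JordanTypeRelations

variable {p : ℕ} {X Y : Fin (p + 1) → L} (hJ : JordanTypeRelations p X Y)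
include hJ

theorem lie_Y_zero_X_eq (i : Fin (p + 1)) :
    ⁅Y 0, X i⁆ = if h : 2 ≤ (i : ℕ) then X ⟨i - 1, by omega⟩ else 0 := by
  split_ifs with hi
  · exact hJ.lie_Y_zero_X i hi
  · obtain h | h : (i : ℕ) = 0 ∨ (i : ℕ) = 1 := by omega
    · rw [show i = 0 from Fin.ext h, hJ.lie_Y_zero_X_zero]
    · rw [show i = 1 from Fin.ext (by rw [Fin.val_one', Nat.mod_eq_of_lt (by omega), h]),
        hJ.lie_Y_zero_X_one]

theorem lie_Y_zero_Y_eq (j : Fin (p + 1)) :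
    ⁅Y 0, Y j⁆ = if h : (j : ℕ) ≠ 0 ∧ (j : ℕ) < p then -Y ⟨j + 1, by omega⟩ else 0 := by
  split_ifs with hj
  · exact hJ.lie_Y_zero_Y j (Fin.val_ne_zero_iff.mp hj.1) hj.2
  · by_cases hj0 : (j : ℕ) = 0
    · rw [show j = 0 from Fin.ext hj0, lie_self]
    · rw [show j = Fin.last p from Fin.ext (by rw [Fin.val_last]; omega), hJ.lie_Y_zero_Y_last]

theorem lie_X_Y_eq (i j : Fin (p + 1)) : ⁅X i, Y j⁆ =
    if (j : ℕ) = 0 then (if h : 2 ≤ (i : ℕ) then -X ⟨i - 1, by omega⟩ else 0)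
    else if (i : ℕ) = j + 1 then X 0 else 0 := by
  split_ifs with hj hi hi
  · rw [Fin.val_eq_zero_iff.mp hj, ← lie_skew, hJ.lie_Y_zero_X_eq, dif_pos hi]
  · rw [Fin.val_eq_zero_iff.mp hj, ← lie_skew, hJ.lie_Y_zero_X_eq, dif_neg hi, neg_zero]
  · rw [show i = ⟨j + 1, by omega⟩ from Fin.ext hi]
    exact hJ.lie_X_succ_Y j (Fin.val_ne_zero_iff.mp hj) (by omega)
  · exact hJ.lie_X_Y i j (Fin.val_ne_zero_iff.mp hj) hi

theorem lie_Y_X_eq (i j : Fin (p + 1)) : ⁅Y i, X j⁆ =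
    if (i : ℕ) = 0 then (if h : 2 ≤ (j : ℕ) then X ⟨j - 1, by omega⟩ else 0)
    else if (j : ℕ) = i + 1 then -X 0 else 0 := by
  rw [← lie_skew, hJ.lie_X_Y_eq]
  split_ifs <;> simp

theorem lie_Y_Y_eq (i j : Fin (p + 1)) : ⁅Y i, Y j⁆ =
    if (i : ℕ) = 0 then (if h : (j : ℕ) ≠ 0 ∧ (j : ℕ) < p then -Y ⟨j + 1, by omega⟩ else 0)
    else if (j : ℕ) = 0 then (if h : (i : ℕ) < p then Y ⟨i + 1, by omega⟩ else 0) else 0 := by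
  split_ifs with hi h hj h
  · rw [Fin.val_eq_zero_iff.mp hi, hJ.lie_Y_zero_Y_eq, dif_pos h]
  · rw [Fin.val_eq_zero_iff.mp hi, hJ.lie_Y_zero_Y_eq, dif_neg h]
  · rw [Fin.val_eq_zero_iff.mp hj, ← lie_skew, hJ.lie_Y_zero_Y_eq, dif_pos ⟨hi, h⟩, neg_neg]
  · rw [Fin.val_eq_zero_iff.mp hj, ← lie_skew, hJ.lie_Y_zero_Y_eq, dif_neg (by omega), neg_zero]
  · exact hJ.lie_Y_Y i j (Fin.val_ne_zero_iff.mp hi) (Fin.val_ne_zero_iff.mp hj)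

variable {R : Type*} [CommRing R] [LieAlgebra R L]
  (b : Module.Basis (Fin (p + 1) ⊕ Fin (p + 1)) R L)
  (hX : ∀ i, X i = b (Sum.inl i)) (hY : ∀ i, Y i = b (Sum.inr i))
include hX hY

theorem lieInvariant {B : LinearMap.BilinForm R L}
    (hB1 : ∀ i j, B (X i) (X j) = 0)
    (hB2 : ∀ i j, B (Y i) (Y j) = 0)
    (hB3 : ∀ i j, B (X i) (Y j) = if i = j then 1 else 0)
    (hB4 : ∀ i j, B (Y i) (X j) = if i = j then 1 else 0) :
    B.lieInvariant L := by
  refine LinearMap.BilinForm.lieInvariant_of_basis b fun k l m => ?_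
  rcases k with ⟨i, hi⟩ | ⟨i, hi⟩ <;> rcases l with ⟨j, hj⟩ | ⟨j, hj⟩ <;>
    rcases m with ⟨k, hk⟩ | ⟨k, hk⟩ <;>
    simp only [← hX, ← hY, hJ.lie_X_X, hJ.lie_X_Y_eq, hJ.lie_Y_X_eq, hJ.lie_Y_Y_eq] <;>
    (try split_ifs) <;>
    simp only [map_neg, map_zero, LinearMap.neg_apply, LinearMap.zero_apply, hB1, hB2, hB3, hB4,
      neg_zero, neg_neg, ← Fin.val_inj, Fin.val_zero] <;>
    (try split_ifs) <;> subst_vars <;> first | (exfalso; omega) | simp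

theorem cyclic_lie_sum_eq_zero {ω : L →ₗ[R] L →ₗ[R] R}
    (hw1 : ∀ i j, ω (X i) (X j) = 0)
    (hw2 : ∀ i j, ω (Y i) (Y j) = 0)
    (hw3 : ∀ i j, ω (X i) (Y j) = if i = j then (if i = 0 then 1 else (i.val : R)) else 0)
    (hw4 : ∀ i j, ω (Y i) (X j) = -(if i = j then (if i = 0 then 1 else (i.val : R)) else 0))
    (x y z : L) : ω ⁅x, y⁆ z + ω ⁅y, z⁆ x + ω ⁅z, x⁆ y = 0 := by
  refine LinearMap.cyclic_lie_sum_eq_zero_of_basis b (fun k l m => ?_) x y z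
  rcases k with ⟨i, hi⟩ | ⟨i, hi⟩ <;> rcases l with ⟨j, hj⟩ | ⟨j, hj⟩ <;>
    rcases m with ⟨k, hk⟩ | ⟨k, hk⟩ <;>
    simp only [← hX, ← hY, hJ.lie_X_X, hJ.lie_X_Y_eq, hJ.lie_Y_X_eq, hJ.lie_Y_Y_eq] <;>
    (try split_ifs) <;>
    simp only [map_neg, map_zero, LinearMap.neg_apply, LinearMap.zero_apply, hw1, hw2, hw3, hw4,
      neg_zero, neg_neg, ← Fin.val_inj, Fin.val_zero, add_zero, zero_add] <;>
    (try split_ifs) <;> subst_vars <;> first | (exfalso; omega) | simp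

end JordanTypeRelations

end

/-- For `p ≥ 2`, the nilpotent Jordan-type Lie algebra `j_{2p}`
(given by a basis `{X_0, …, X_p, Y_0, …, Y_p}` with the indicated brackets), together
with the bilinear form `B̄` and the alternating form `ω` determined by
`ω(X_0, Y_0) = 1`, `ω(X_i, Y_i) = i`, is a symplectic quadratic Lie algebra:
`B̄` is symmetric, invariant and nondegenerate, and `ω` is a nondegenerate 2-cocycle. -/
theorem jordanType_symplectic_quadratic
    (p : ℕ)
    (g : Type) [LieRing g] [LieAlgebra ℂ g]
    (b : Module.Basis (Fin (p+1) ⊕ Fin (p+1)) ℂ g)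
    -- notation: `X i = b (Sum.inl i)`, `Y i = b (Sum.inr i)`
    (X : Fin (p+1) → g) (Y : Fin (p+1) → g)
    (hX : ∀ i, X i = b (Sum.inl i)) (hY : ∀ i, Y i = b (Sum.inr i))
    -- the nonzero brackets
    (h1 : ∀ (i : ℕ) (h2i : 2 ≤ i) (hip : i ≤ p),
      ⁅Y 0, X ⟨i, by omega⟩⁆ = X ⟨i - 1, by omega⟩)
    (h2 : ∀ (i : ℕ) (h1i : 1 ≤ i) (hip : i + 1 ≤ p),
      ⁅Y 0, Y ⟨i, by omega⟩⁆ = -(Y ⟨i + 1, by omega⟩))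
    (h3 : ∀ (i : ℕ) (h1i : 1 ≤ i) (hip : i + 1 ≤ p),
      ⁅X ⟨i + 1, by omega⟩, Y ⟨i, by omega⟩⁆ = X 0)
    -- all other brackets of basis vectors vanish
    (h4 : ∀ i j, ⁅X i, X j⁆ = 0)
    (h5 : ⁅Y 0, X 0⁆ = 0)
    (h6 : ⁅Y 0, X 1⁆ = 0)
    (h7 : ⁅Y 0, Y ⟨p, by omega⟩⁆ = 0)
    (h8 : ∀ i j : Fin (p+1), i ≠ 0 → j ≠ 0 → ⁅Y i, Y j⁆ = 0)
    (h9 : ∀ i j : Fin (p+1), j ≠ 0 → i.val ≠ j.val + 1 → ⁅X i, Y j⁆ = 0)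
    -- the bilinear form B̄
    (B : g →ₗ[ℂ] g →ₗ[ℂ] ℂ)
    (hB1 : ∀ i j, B (X i) (X j) = 0)
    (hB2 : ∀ i j, B (Y i) (Y j) = 0)
    (hB3 : ∀ i j, B (X i) (Y j) = if i = j then 1 else 0)
    (hB4 : ∀ i j, B (Y i) (X j) = if i = j then 1 else 0)
    -- the alternating form ω
    (ω : g →ₗ[ℂ] g →ₗ[ℂ] ℂ)
    (hw1 : ∀ i j, ω (X i) (X j) = 0)
    (hw2 : ∀ i j, ω (Y i) (Y j) = 0)
    (hw3 : ∀ i j, ω (X i) (Y j) =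
      if i = j then (if i = 0 then 1 else (i.val : ℂ)) else 0)
    (hw4 : ∀ i j, ω (Y i) (X j) =
      -(if i = j then (if i = 0 then 1 else (i.val : ℂ)) else 0)) :
    -- `(g, B̄)` is a quadratic Lie algebra …
    (∀ x y, B x y = B y x) ∧
    (∀ x y z, B ⁅x, y⁆ z = B x ⁅y, z⁆) ∧
    (∀ x, (∀ y, B x y = 0) → x = 0) ∧
    -- … and `ω` is a symplectic structure on it
    (∀ x, ω x x = 0) ∧
    (∀ x, (∀ y, ω x y = 0) → x = 0) ∧
    (∀ x y z, ω ⁅x, y⁆ z + ω ⁅y, z⁆ x + ω ⁅z, x⁆ y = 0) := by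
  have hJ : JordanTypeRelations p X Y :=
    ⟨fun i hi => h1 i hi (by omega), fun i hi hip => h2 i (Fin.pos_iff_ne_zero.mpr hi) hip,
      fun i hi hip => h3 i (Fin.pos_iff_ne_zero.mpr hi) hip, h4, h5, h6, h7, h8, h9⟩
  have hB_symm : B = B.flip := LinearMap.ext_basis b b fun k l => by
    rcases k with i | i <;> rcases l with j | j <;> simp [← hX, ← hY, hB1, hB2, hB3, hB4, eq_comm]
  have hω_skew : ω = -ω.flip := LinearMap.ext_basis b b fun k l => by
    rcases k with i | i <;> rcases l with j | j <;>
      simp +contextual [← hX, ← hY, hw1, hw2, hw3, hw4, eq_comm]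
  have hB_inv := hJ.lieInvariant b hX hY hB1 hB2 hB3 hB4
  refine ⟨LinearMap.BilinMap.isSymm_iff_eq_flip.mpr hB_symm, fun x y z => ?_, ?_,
    LinearMap.isAlt_iff_eq_neg_flip.mpr hω_skew, ?_,
    hJ.cyclic_lie_sum_eq_zero b hX hY hw1 hw2 hw3 hw4⟩
  · rw [← lie_skew, map_neg, LinearMap.neg_apply, hB_inv, neg_neg]
  · refine LinearMap.separatingLeft_of_basis_pairing b B (fun k => b k.swap) 1
      (fun _ => one_ne_zero) fun k l => ?_
    rcases k with i | i <;> rcases l with j | j <;> simp [← hX, ← hY, hB1, hB2, hB3, hB4]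
  · let w : Fin (p + 1) → ℂ := fun i => if i = 0 then 1 else (i.val : ℂ)
    have hw : ∀ i, w i ≠ 0 := fun i => by
      unfold w
      split_ifs with hi
      exacts [one_ne_zero, Nat.cast_ne_zero.mpr (Fin.val_ne_zero_iff.mpr hi)]
    refine LinearMap.separatingLeft_of_basis_pairing b ω (fun k => b k.swap) (Sum.elim w (-w))
      (by rintro (i | i) <;> simp [hw i]) fun k l => ?_
    rcases k with i | i <;> rcases l with j | j <;>
      simp [w, ← hX, ← hY, hw1, hw2, hw3, hw4, neg_ite]
end

section
/- For every n ≥ 1, the second cohomology group of g_{2n+2} with trivial coefficients has dimension dim H²(g_{2n+2},ℂ) = n² − 1. -/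
open Module

/-- The space of 2-coboundaries (trivial coefficients). -/
noncomputable def twoCoboundaries (g : Type) [LieRing g] [LieAlgebra ℂ g] :
    Submodule ℂ (g →ₗ[ℂ] g →ₗ[ℂ] ℂ) where
  carrier := {Ω | ∃ f : g →ₗ[ℂ] ℂ, ∀ x y, Ω x y = f ⁅x, y⁆}
  add_mem' := by
    rintro a b ⟨f, hf⟩ ⟨f', hf'⟩
    exact ⟨f + f', fun x y => by simp [hf x y, hf' x y]⟩
  smul_mem' := by
    rintro c a ⟨f, hf⟩
    exact ⟨c • f, fun x y => by simp [hf x y]⟩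
  zero_mem' := ⟨0, fun x y => by simp⟩

/-- The second cohomology group `H²(g, ℂ) = Z²(g, ℂ) / B²(g, ℂ)`. -/
noncomputable def secondCohomology (g : Type) [LieRing g] [LieAlgebra ℂ g] : Type :=
  @HasQuotient.Quotient ↥(twoCocycles g) (Submodule ℂ ↥(twoCocycles g))
    (@Submodule.hasQuotient ℂ ↥(twoCocycles g) _ _ _) ((twoCoboundaries g).comap (twoCocycles g).subtype)

noncomputable instance (g : Type) [LieRing g] [LieAlgebra ℂ g] :
    AddCommGroup (secondCohomology g) :=
  Submodule.Quotient.addCommGroup _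

noncomputable instance (g : Type) [LieRing g] [LieAlgebra ℂ g] :
    Module ℂ (secondCohomology g) :=
  Submodule.Quotient.module _

/-!
`ad Y₀` acts diagonally on `g_{2n+2}`, with weight `1` on `X_i`, `-1` on `Y_i` (`i ≥ 1`) and
`0` on `X₀, Y₀`. The cocycle identity on `(Y₀, a, c)` reads `(wt a + wt c) Ω(a, c) = Ω(Y₀, ⁅a, c⁆)`;
it makes every 2-cocycle vanish on `(X_i, X_j)`, on `(X₀, Y_j)` and on `(Y_i, Y_j)` for
`i, j ≥ 1`, and applied to `(X_t, Y_t)` it gives `Ω(X₀, Y₀) = 0`. So a cocycle whose block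
`(Ω(X_i, Y_j))_{i,j ≥ 1}` is a scalar matrix `c • 1` is the coboundary of `X₀ ↦ c`,
`X_i ↦ -Ω(X_i, Y₀)`, `Y_j ↦ -Ω(Y₀, Y_j)`, while every matrix is such a block, realised by
combinations of the cocycles `x_i* ∧ y_j*` (weights `1 - 1 = 0`).
Hence `H²(g_{2n+2}, ℂ) ≅ M_n(ℂ) ⧸ ℂ • 1`.
-/

section Cocycles

variable {g : Type} [LieRing g] [LieAlgebra ℂ g] {Ω : g →ₗ[ℂ] g →ₗ[ℂ] ℂ}

theorem apply_swap_of_mem_twoCocycles (hΩ : Ω ∈ twoCocycles g) (x y : g) :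
    Ω y x = -Ω x y := by
  have h := hΩ.1 (x + y)
  simp only [map_add, LinearMap.add_apply, hΩ.1 x, hΩ.1 y] at h
  linear_combination h

theorem add_mul_apply_of_mem_twoCocycles (hΩ : Ω ∈ twoCocycles g) {y a c : g} {α β : ℂ}
    (ha : ⁅y, a⁆ = α • a) (hc : ⁅y, c⁆ = β • c) :
    (α + β) * Ω a c = Ω y ⁅a, c⁆ := by
  have h := hΩ.2 y a c
  rw [ha, ← lie_skew c y, hc, apply_swap_of_mem_twoCocycles hΩ y ⁅a, c⁆] at h
  simp only [map_smul, map_neg, LinearMap.smul_apply, LinearMap.neg_apply, smul_eq_mul,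
    apply_swap_of_mem_twoCocycles hΩ a c] at h
  linear_combination h

theorem apply_eq_zero_of_mem_twoCocycles (hΩ : Ω ∈ twoCocycles g) {y a c : g} {α β : ℂ}
    (ha : ⁅y, a⁆ = α • a) (hc : ⁅y, c⁆ = β • c) (hαβ : α + β ≠ 0) (hac : ⁅a, c⁆ = 0) :
    Ω a c = 0 := by
  have h := add_mul_apply_of_mem_twoCocycles hΩ ha hc
  rw [hac, map_zero] at h
  exact (mul_eq_zero.mp h).resolve_left hαβ

end Cocycles

namespace LinearMap

variable {R M : Type*} [CommRing R] [AddCommGroup M] [Module R M]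

def wedge (α β : M →ₗ[R] R) : M →ₗ[R] M →ₗ[R] R :=
  α.smulRight β - β.smulRight α

@[simp]
theorem wedge_apply (α β : M →ₗ[R] R) (x y : M) : α.wedge β x y = α x * β y - β x * α y := by
  simp [wedge]

end LinearMap

theorem wedge_mem_twoCocycles {g : Type} [LieRing g] [LieAlgebra ℂ g] {χ α β : g →ₗ[ℂ] ℂ}
    (hα : ∀ a c, α ⁅a, c⁆ = χ.wedge α a c) (hβ : ∀ a c, β ⁅a, c⁆ = β.wedge χ a c) :
    α.wedge β ∈ twoCocycles g := by
  refine ⟨fun x => by simp [mul_comm], fun a b c => ?_⟩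
  simp only [LinearMap.wedge_apply, hα, hβ]
  ring

theorem apply_lie_eq_of_basis {g : Type} [LieRing g] [LieAlgebra ℂ g] {ι : Type*}
    (b : Basis ι ℂ g) {f : g →ₗ[ℂ] ℂ} {B : g →ₗ[ℂ] g →ₗ[ℂ] ℂ}
    (h : ∀ u v, f ⁅b u, b v⁆ = B (b u) (b v)) (x y : g) : f ⁅x, y⁆ = B x y := by
  have hB : (LieAlgebra.ad ℂ g : g →ₗ[ℂ] Module.End ℂ g).compr₂ f = B :=
    LinearMap.ext_basis b b fun u v => by simpa using h u v
  simp [← hB]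

theorem finrank_secondCohomology_eq_of_surjective {g : Type} [LieRing g] [LieAlgebra ℂ g]
    {W : Type*} [AddCommGroup W] [Module ℂ W] (ψ : twoCocycles g →ₗ[ℂ] W)
    (hψ : Function.Surjective ψ)
    (hker : LinearMap.ker ψ = (twoCoboundaries g).comap (twoCocycles g).subtype) :
    finrank ℂ (secondCohomology g) = finrank ℂ W :=
  ((Submodule.quotEquivOfEq _ _ hker.symm).trans (ψ.quotKerEquivOfSurjective hψ)).finrank_eq

theorem finrank_matrix_quotient_span_one {K ι : Type*} [Field K] [Fintype ι] [DecidableEq ι] :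
    finrank K (Matrix ι ι K ⧸ K ∙ (1 : Matrix ι ι K)) = Fintype.card ι ^ 2 - 1 := by
  have h := Submodule.finrank_quotient_add_finrank (K ∙ (1 : Matrix ι ι K))
  rw [Module.finrank_matrix, finrank_self, mul_one, ← sq] at h
  rcases isEmpty_or_nonempty ι with hι | hι
  · rw [Fintype.card_eq_zero] at h ⊢
    omega
  · rw [finrank_span_singleton one_ne_zero] at h
    omega

section G2n2

open Sum

variable {g : Type} [LieRing g] {n : ℕ}

structure G2n2Brackets (X Y : Fin (n + 1) → g) : Prop where
  lie_Y_zero_X : ∀ i : Fin (n + 1), i ≠ 0 → ⁅Y 0, X i⁆ = X i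
  lie_Y_zero_Y : ∀ i : Fin (n + 1), i ≠ 0 → ⁅Y 0, Y i⁆ = -(Y i)
  lie_X_Y_self : ∀ i : Fin (n + 1), i ≠ 0 → ⁅X i, Y i⁆ = X 0
  lie_X_X : ∀ i j, ⁅X i, X j⁆ = 0
  lie_Y_zero_X_zero : ⁅Y 0, X 0⁆ = 0
  lie_Y_Y : ∀ i j : Fin (n + 1), i ≠ 0 → j ≠ 0 → ⁅Y i, Y j⁆ = 0
  lie_X_Y_of_ne : ∀ i j : Fin (n + 1), j ≠ 0 → i ≠ j → ⁅X i, Y j⁆ = 0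

namespace G2n2Brackets

variable {X Y : Fin (n + 1) → g} (hg : G2n2Brackets X Y)
include hg

theorem lie_Y_zero_X_succ (i : Fin n) : ⁅Y 0, X i.succ⁆ = X i.succ :=
  hg.lie_Y_zero_X _ i.succ_ne_zero

theorem lie_Y_zero_Y_succ (j : Fin n) : ⁅Y 0, Y j.succ⁆ = -Y j.succ :=
  hg.lie_Y_zero_Y _ j.succ_ne_zero

theorem lie_X_succ_Y_succ (i j : Fin n) :
    ⁅X i.succ, Y j.succ⁆ = if i = j then X 0 else 0 := by
  split_ifs with hij
  · subst hij
    exact hg.lie_X_Y_self _ i.succ_ne_zero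
  · exact hg.lie_X_Y_of_ne i.succ _ j.succ_ne_zero ((Fin.succ_injective n).ne hij)

theorem lie_X_zero_Y_succ (j : Fin n) : ⁅X 0, Y j.succ⁆ = 0 :=
  hg.lie_X_Y_of_ne _ _ j.succ_ne_zero j.succ_ne_zero.symm

theorem lie_Y_succ_Y_succ (i j : Fin n) : ⁅Y i.succ, Y j.succ⁆ = 0 :=
  hg.lie_Y_Y _ _ i.succ_ne_zero j.succ_ne_zero

theorem lie_X_zero_Y_zero : ⁅X 0, Y 0⁆ = 0 := by
  rw [← lie_skew, hg.lie_Y_zero_X_zero, neg_zero]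

theorem lie_X_succ_Y_zero (i : Fin n) : ⁅X i.succ, Y 0⁆ = -X i.succ := by
  rw [← lie_skew, hg.lie_Y_zero_X_succ]

theorem lie_Y_succ_Y_zero (j : Fin n) : ⁅Y j.succ, Y 0⁆ = Y j.succ := by
  rw [← lie_skew, hg.lie_Y_zero_Y_succ, neg_neg]

theorem lie_Y_succ_X_zero (j : Fin n) : ⁅Y j.succ, X 0⁆ = 0 := by
  rw [← lie_skew, hg.lie_X_zero_Y_succ, neg_zero]

theorem lie_Y_succ_X_succ (i j : Fin n) :
    ⁅Y j.succ, X i.succ⁆ = if i = j then -X 0 else 0 := by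
  rw [← lie_skew, hg.lie_X_succ_Y_succ]
  split_ifs <;> simp

variable [LieAlgebra ℂ g]

theorem lie_Y_zero_X_eq_smul (i : Fin (n + 1)) :
    ⁅Y 0, X i⁆ = (if i = 0 then 0 else 1 : ℂ) • X i := by
  cases i using Fin.cases with
  | zero => simp [hg.lie_Y_zero_X_zero]
  | succ i => simp [hg.lie_Y_zero_X_succ]

theorem lie_Y_zero_Y_eq_smul (j : Fin (n + 1)) :
    ⁅Y 0, Y j⁆ = (if j = 0 then 0 else -1 : ℂ) • Y j := by
  cases j using Fin.cases with
  | zero => simp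
  | succ j => simp [hg.lie_Y_zero_Y_succ]

section Cocycle

variable {Ω : g →ₗ[ℂ] g →ₗ[ℂ] ℂ} (hΩ : Ω ∈ twoCocycles g)
include hΩ

theorem apply_X_X (i j : Fin (n + 1)) : Ω (X i) (X j) = 0 := by
  by_cases hij : i = 0 ∧ j = 0
  · rw [hij.1, hij.2]
    exact hΩ.1 _
  · refine apply_eq_zero_of_mem_twoCocycles hΩ (hg.lie_Y_zero_X_eq_smul i)
      (hg.lie_Y_zero_X_eq_smul j) ?_ (hg.lie_X_X i j)
    split_ifs <;> simp_all

theorem apply_X_zero_Y_succ (j : Fin n) : Ω (X 0) (Y j.succ) = 0 :=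
  apply_eq_zero_of_mem_twoCocycles hΩ (hg.lie_Y_zero_X_eq_smul 0) (hg.lie_Y_zero_Y_eq_smul _)
    (by simp) (hg.lie_X_zero_Y_succ j)

theorem apply_Y_succ_Y_succ (i j : Fin n) : Ω (Y i.succ) (Y j.succ) = 0 :=
  apply_eq_zero_of_mem_twoCocycles hΩ (hg.lie_Y_zero_Y_eq_smul _) (hg.lie_Y_zero_Y_eq_smul _)
    (by norm_num) (hg.lie_Y_succ_Y_succ i j)

theorem apply_X_zero_Y_zero (hn : 1 ≤ n) : Ω (X 0) (Y 0) = 0 := by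
  let t : Fin n := ⟨0, hn⟩
  have h := add_mul_apply_of_mem_twoCocycles hΩ (hg.lie_Y_zero_X_eq_smul t.succ)
    (hg.lie_Y_zero_Y_eq_smul t.succ)
  rw [hg.lie_X_succ_Y_succ, if_pos rfl] at h
  rw [apply_swap_of_mem_twoCocycles hΩ, ← h]
  simp

end Cocycle

section Basis

variable {b : Basis (Fin (n + 1) ⊕ Fin (n + 1)) ℂ g}
  (hX : ∀ i, X i = b (inl i)) (hY : ∀ i, Y i = b (inr i))

include hX hY

/-- The only brackets with a component along `X_k` or `Y_k` (`k ≥ 1`) are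
`⁅Y₀, X_k⁆ = X_k` and `⁅Y₀, Y_k⁆ = -Y_k`. -/
theorem coord_succ_lie (k : Fin n) (a c : g) :
    b.coord (inl k.succ) ⁅a, c⁆ = (b.coord (inr 0)).wedge (b.coord (inl k.succ)) a c ∧
      b.coord (inr k.succ) ⁅a, c⁆ = (b.coord (inr k.succ)).wedge (b.coord (inr 0)) a c := by
  constructor <;> refine apply_lie_eq_of_basis b (fun u v => ?_) a c <;>
    rcases u with i | i <;> rcases v with j | j <;> simp only [← hX, ← hY] <;>
    cases i using Fin.cases <;> cases j using Fin.cases <;>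
    simp only [hg.lie_X_X, hg.lie_X_zero_Y_zero, hg.lie_X_zero_Y_succ, hg.lie_X_succ_Y_zero,
      hg.lie_X_succ_Y_succ, hg.lie_Y_zero_X_zero, hg.lie_Y_zero_X_succ, hg.lie_Y_succ_X_zero,
      hg.lie_Y_succ_X_succ, hg.lie_Y_zero_Y_succ, hg.lie_Y_succ_Y_zero, hg.lie_Y_succ_Y_succ,
      lie_self] <;>
    simp [hX, hY, Finsupp.single_apply, apply_ite, (Fin.succ_ne_zero _).symm]

end Basis

end G2n2Brackets

variable [LieAlgebra ℂ g]

def cocycleMatrix (X Y : Fin (n + 1) → g) : twoCocycles g →ₗ[ℂ] Matrix (Fin n) (Fin n) ℂ where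
  toFun Ω := Matrix.of fun i j => (Ω : g →ₗ[ℂ] g →ₗ[ℂ] ℂ) (X i.succ) (Y j.succ)
  map_add' _ _ := by ext; simp
  map_smul' _ _ := by ext; simp

variable {X Y : Fin (n + 1) → g} (hg : G2n2Brackets X Y) {b : Basis (Fin (n + 1) ⊕ Fin (n + 1)) ℂ g}
  (hX : ∀ i, X i = b (inl i)) (hY : ∀ i, Y i = b (inr i))
include hg hX hY

theorem cocycleMatrix_surjective : Function.Surjective (cocycleMatrix X Y) := by
  intro m
  have hmem (i j : Fin n) : (b.coord (inl i.succ)).wedge (b.coord (inr j.succ)) ∈ twoCocycles g :=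
    wedge_mem_twoCocycles (fun a c => (hg.coord_succ_lie hX hY i a c).1)
      (fun a c => (hg.coord_succ_lie hX hY j a c).2)
  refine ⟨⟨∑ i, ∑ j, m i j • (b.coord (inl i.succ)).wedge (b.coord (inr j.succ)),
    Submodule.sum_mem _ fun i _ => Submodule.sum_mem _ fun j _ =>
      Submodule.smul_mem _ _ (hmem i j)⟩, ?_⟩
  ext k l
  simp [cocycleMatrix, hX, hY, Finsupp.single_apply]

theorem mem_twoCoboundaries_of_cocycleMatrix_eq_smul_one (hn : 1 ≤ n) (Ω : twoCocycles g) (c : ℂ)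
    (hc : cocycleMatrix X Y Ω = c • 1) : (Ω : g →ₗ[ℂ] g →ₗ[ℂ] ℂ) ∈ twoCoboundaries g := by
  obtain ⟨Ω, hΩ⟩ := Ω
  have hmat (i j : Fin n) : Ω (X i.succ) (Y j.succ) = if i = j then c else 0 := by
    simpa [cocycleMatrix, Matrix.one_apply] using congr_fun (congr_fun hc i) j
  let f : g →ₗ[ℂ] ℂ := b.constr ℂ <| Sum.elim
    (Fin.cons c fun i => -Ω (X i.succ) (Y 0)) (Fin.cons 0 fun j => -Ω (Y 0) (Y j.succ))
  have hfX_zero : f (X 0) = c := by simp [f, hX]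
  have hfX_succ (i : Fin n) : f (X i.succ) = -Ω (X i.succ) (Y 0) := by simp [f, hX]
  have hfY_succ (j : Fin n) : f (Y j.succ) = -Ω (Y 0) (Y j.succ) := by simp [f, hY]
  have hXY (i j : Fin (n + 1)) : Ω (X i) (Y j) = f ⁅X i, Y j⁆ := by
    cases i using Fin.cases <;> cases j using Fin.cases
    · simp [hg.apply_X_zero_Y_zero hΩ hn, hg.lie_X_zero_Y_zero]
    · simp [hg.apply_X_zero_Y_succ hΩ, hg.lie_X_zero_Y_succ]
    · simp [hg.lie_X_succ_Y_zero, hfX_succ]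
    · simp [hmat, hg.lie_X_succ_Y_succ, apply_ite f, hfX_zero]
  have hYY (i j : Fin (n + 1)) : Ω (Y i) (Y j) = f ⁅Y i, Y j⁆ := by
    cases i using Fin.cases <;> cases j using Fin.cases
    · simp [hΩ.1]
    · simp [hg.lie_Y_zero_Y_succ, hfY_succ]
    · simp [apply_swap_of_mem_twoCocycles hΩ (Y 0), hg.lie_Y_succ_Y_zero, hfY_succ]
    · simp [hg.apply_Y_succ_Y_succ hΩ, hg.lie_Y_succ_Y_succ]
  refine ⟨f, fun x y => (apply_lie_eq_of_basis b (fun u v => ?_) x y).symm⟩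
  rcases u with i | i <;> rcases v with j | j <;> simp only [← hX, ← hY]
  · simp [hg.apply_X_X hΩ, hg.lie_X_X]
  · exact (hXY i j).symm
  · rw [apply_swap_of_mem_twoCocycles hΩ, ← lie_skew, map_neg, hXY]
  · exact (hYY i j).symm

omit hX hY in
theorem cocycleMatrix_mem_span_one_of_mem_twoCoboundaries (Ω : twoCocycles g)
    (hΩ : (Ω : g →ₗ[ℂ] g →ₗ[ℂ] ℂ) ∈ twoCoboundaries g) :
    cocycleMatrix X Y Ω ∈ ℂ ∙ (1 : Matrix (Fin n) (Fin n) ℂ) := by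
  obtain ⟨f, hf⟩ := hΩ
  refine Submodule.mem_span_singleton.mpr ⟨f (X 0), ?_⟩
  ext i j
  simp [cocycleMatrix, hf, hg.lie_X_succ_Y_succ, Matrix.one_apply, apply_ite f]

theorem ker_mkQ_comp_cocycleMatrix (hn : 1 ≤ n) :
    LinearMap.ker ((ℂ ∙ (1 : Matrix (Fin n) (Fin n) ℂ)).mkQ ∘ₗ cocycleMatrix X Y) =
      (twoCoboundaries g).comap (twoCocycles g).subtype := by
  rw [LinearMap.ker_comp, Submodule.ker_mkQ]
  ext Ω
  rw [Submodule.mem_comap, Submodule.mem_comap, Submodule.mem_span_singleton]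
  constructor
  · rintro ⟨c, hc⟩
    exact mem_twoCoboundaries_of_cocycleMatrix_eq_smul_one hg hX hY hn Ω c hc.symm
  · exact fun hΩ => Submodule.mem_span_singleton.mp
      (cocycleMatrix_mem_span_one_of_mem_twoCoboundaries hg Ω hΩ)

end G2n2

/-- For `n ≥ 1`, the Lie algebra `g_{2n+2}` (with basis
`{X_0, …, X_n, Y_0, …, Y_n}` and nonzero brackets `⁅Y_0, X_i⁆ = X_i`,
`⁅Y_0, Y_i⁆ = −Y_i`, `⁅X_i, Y_i⁆ = X_0` for `1 ≤ i ≤ n`) satisfies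
`dim H²(g_{2n+2}, ℂ) = n² − 1`. -/
theorem dim_secondCohomology_g2n2 (n : ℕ) (hn : 1 ≤ n)
    (g : Type) [LieRing g] [LieAlgebra ℂ g]
    (b : Basis (Fin (n+1) ⊕ Fin (n+1)) ℂ g)
    (X : Fin (n+1) → g) (Y : Fin (n+1) → g)
    (hX : ∀ i, X i = b (Sum.inl i)) (hY : ∀ i, Y i = b (Sum.inr i))
    (h1 : ∀ i : Fin (n+1), i ≠ 0 → ⁅Y 0, X i⁆ = X i)
    (h2 : ∀ i : Fin (n+1), i ≠ 0 → ⁅Y 0, Y i⁆ = -(Y i))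
    (h3 : ∀ i : Fin (n+1), i ≠ 0 → ⁅X i, Y i⁆ = X 0)
    (h4 : ∀ i j, ⁅X i, X j⁆ = 0)
    (h5 : ⁅Y 0, X 0⁆ = 0)
    (h6 : ∀ i j : Fin (n+1), i ≠ 0 → j ≠ 0 → ⁅Y i, Y j⁆ = 0)
    (h7 : ∀ i j : Fin (n+1), j ≠ 0 → i ≠ j → ⁅X i, Y j⁆ = 0) :
    finrank ℂ (secondCohomology g) = n ^ 2 - 1 := by
  have hg : G2n2Brackets X Y := ⟨h1, h2, h3, h4, h5, h6, h7⟩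
  have hsurj : Function.Surjective
      ((ℂ ∙ (1 : Matrix (Fin n) (Fin n) ℂ)).mkQ ∘ₗ cocycleMatrix X Y) := by
    rw [LinearMap.coe_comp]
    exact (Submodule.mkQ_surjective _).comp (cocycleMatrix_surjective hg hX hY)
  rw [finrank_secondCohomology_eq_of_surjective _ hsurj (ker_mkQ_comp_cocycleMatrix hg hX hY hn),
    finrank_matrix_quotient_span_one, Fintype.card_fin]
end

section
/- For every n ≥ 1 and k ≥ 0: K(1,k,k,n) = 0 if 2k < n, and K(1,k,k,n) = C(n,k)² − C(n,k+1)² if 2k ≥ n, where C(n,j) denotes the binomial coefficient (0 when j > n). -/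
open Module

/-- The basis covector `α_i` in the exterior algebra of `ℂ^{2n}`. -/
noncomputable def alphaV (n : ℕ) (i : Fin n) :
    ExteriorAlgebra ℂ ((Fin n ⊕ Fin n) → ℂ) :=
  ExteriorAlgebra.ι ℂ (Pi.single (Sum.inl i) 1)

/-- The basis covector `β_i` in the exterior algebra of `ℂ^{2n}`. -/
noncomputable def betaV (n : ℕ) (i : Fin n) :
    ExteriorAlgebra ℂ ((Fin n ⊕ Fin n) → ℂ) :=
  ExteriorAlgebra.ι ℂ (Pi.single (Sum.inr i) 1)

/-- `Ω_n = ∑ α_i ∧ β_i`. -/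
noncomputable def OmegaV (n : ℕ) : ExteriorAlgebra ℂ ((Fin n ⊕ Fin n) → ℂ) :=
  ∑ i : Fin n, alphaV n i * betaV n i

/-- The subspace `V_{k₁,k₂}` spanned by the monomials
`α_{i_1} ∧ … ∧ α_{i_{k₁}} ∧ β_{j_1} ∧ … ∧ β_{j_{k₂}}`. -/
noncomputable def Vkk (n k₁ k₂ : ℕ) :
    Submodule ℂ (ExteriorAlgebra ℂ ((Fin n ⊕ Fin n) → ℂ)) :=
  Submodule.span ℂ {x | ∃ s t : Finset (Fin n), s.card = k₁ ∧ t.card = k₂ ∧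
    x = ((s.sort (· ≤ ·)).map (alphaV n)).prod * ((t.sort (· ≤ ·)).map (betaV n)).prod}

/-- `K(m, k₁, k₂, n)`: the dimension of the kernel of
`φ^m_{k₁,k₂,n} : V_{k₁,k₂} → Λ(ℂ^{2n})`, `ω ↦ Ω_n^m ∧ ω`. -/
noncomputable def Kdim (m k₁ k₂ n : ℕ) : ℕ :=
  finrank ℂ (LinearMap.ker
    ((LinearMap.mulLeft ℂ ((OmegaV n) ^ m)).comp (Vkk n k₁ k₂).subtype))

/-- `K(m, k₁, k₂, n)` for integer arguments `k₁, k₂`, taken to be `0` when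
`k₁ < 0` or `k₂ < 0`. -/
noncomputable def KdimZ (m : ℕ) (k₁ k₂ : ℤ) (n : ℕ) : ℤ :=
  if 0 ≤ k₁ ∧ 0 ≤ k₂ then (Kdim m k₁.toNat k₂.toNat n : ℤ) else 0

/-!
Write `ω_A = ∏_{i ∈ A} α_i β_i` (these factors are even, so they commute) and regroup the
monomial `α_s β_t` as `ω_{s ∩ t} α_{s \ t} β_{t \ s}`. Up to sign these regrouped monomials are
the standard monomial basis, and `Ω` multiplies them without any sign:
`Ω ∧ m(s, t) = ∑_{i ∉ s ∪ t} m(s ∪ {i}, t ∪ {i})`. So `φ¹` on `V_{k₁,k₂}` is the operator `E`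
on functions of pairs of subsets of `{1, …, n}` which adds a common element. Its adjoint `F`
removes a common element, and on pairs of sizes `(k₁, k₂)` the commutator is
`F E - E F = n - k₁ - k₂` (the `sl₂` relation). Since `E F` and `F E` are positive, `F E` is
injective in bidegree `(k₁, k₂)` when `k₁ + k₂ < n`, and `E F` is injective in bidegree
`(k₁ + 1, k₂ + 1)` when `n ≤ k₁ + k₂ + 1`; hence `E` is injective, resp. surjective, and
rank–nullity gives the dimension of the kernel.
-/

namespace ExteriorAlgebra

variable {R M I : Type*} [CommRing R] [AddCommGroup M] [Module R M]

theorem ι_mul_ι_anticomm (x y : M) : ι R x * ι R y = -(ι R y * ι R x) :=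
  eq_neg_of_add_eq_zero_left (ι_add_mul_swap x y)

theorem ι_commute_ι_mul_ι (x y z : M) : Commute (ι R x) (ι R y * ι R z) := by
  rw [Commute, SemiconjBy, ← mul_assoc, ι_mul_ι_anticomm x y, neg_mul, mul_assoc,
    ι_mul_ι_anticomm x z, mul_neg, neg_neg, mul_assoc]

open Set.powersetCard

variable [LinearOrder I] (b : Basis I R M)

theorem basis_empty : b.ExteriorAlgebra ∅ = 1 := by
  simp [basis_apply]

theorem basis_singleton (i : I) : b.ExteriorAlgebra {i} = ι R (b i) := by
  rw [basis_apply_ofCard b (Finset.card_singleton i)]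
  have h := (mem_range_ofFinEmbEquiv_symm_iff_mem (ofCard (Finset.card_singleton i)) _).mp ⟨0, rfl⟩
  simpa [ιMulti_apply] using congrArg b (Finset.mem_singleton.mp h)

theorem basis_mul_eq_zero_of_not_disjoint {S T : Finset I} (h : ¬Disjoint S T) :
    b.ExteriorAlgebra S * b.ExteriorAlgebra T = 0 :=
  basis_mul_of_not_disjoint b (ofCard (s := S) rfl) (ofCard (s := T) rfl) h

theorem exists_basis_mul_of_disjoint [DecidableEq I] {S T : Finset I} (h : Disjoint S T) :
    ∃ u : Rˣ, b.ExteriorAlgebra S * b.ExteriorAlgebra T = u • b.ExteriorAlgebra (S ∪ T) := by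
  obtain ⟨σ, hσ⟩ : ∃ σ : ℤˣ,
      b.ExteriorAlgebra S * b.ExteriorAlgebra T = σ • b.ExteriorAlgebra (S.disjUnion T h) :=
    ⟨_, basis_mul_of_disjoint b (ofCard (s := S) rfl) (ofCard (s := T) rfl) h⟩
  refine ⟨Units.map (Int.castRingHom R).toMonoidHom σ, ?_⟩
  rw [hσ, Finset.disjUnion_eq_union, Units.smul_def, Units.smul_def, Units.coe_map]
  exact (Int.cast_smul_eq_zsmul R _ _).symm

theorem exists_list_prod_eq_smul_basis [DecidableEq I] {L : List I} (hL : L.Nodup) :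
    ∃ u : Rˣ, (L.map fun i => ι R (b i)).prod = u • b.ExteriorAlgebra L.toFinset := by
  induction L with
  | nil => exact ⟨1, by simp [basis_empty]⟩
  | cons i L ih =>
    obtain ⟨hi, hL⟩ := List.nodup_cons.mp hL
    obtain ⟨u, hu⟩ := ih hL
    obtain ⟨v, hv⟩ := exists_basis_mul_of_disjoint b
      (Finset.disjoint_singleton_left.mpr (mt List.mem_toFinset.mp hi))
    refine ⟨u * v, ?_⟩
    rw [List.map_cons, List.prod_cons, hu, mul_smul_comm, ← basis_singleton, hv, smul_smul,
      List.toFinset_cons, Finset.insert_eq]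

end ExteriorAlgebra

theorem eq_zero_of_comp_add_smul_eq_zero {𝕜 V : Type*} [RCLike 𝕜] [NormedAddCommGroup V]
    [InnerProductSpace 𝕜 V] {A B : V →ₗ[𝕜] V} (hAB : ∀ x y, inner 𝕜 (A x) y = inner 𝕜 x (B y))
    {c : ℝ} (hc : 0 < c) {x : V} (hx : B (A x) + (c : 𝕜) • x = 0) : x = 0 := by
  have h := congrArg (fun v => RCLike.re (inner 𝕜 x v)) hx
  simp only [inner_add_right, ← hAB, inner_smul_right, map_add, RCLike.re_ofReal_mul,
    inner_self_eq_norm_sq, inner_zero_right, map_zero] at h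
  have : ‖x‖ ^ 2 = 0 := by nlinarith [sq_nonneg ‖A x‖, sq_nonneg ‖x‖]
  simpa using this

abbrev PairSpace (ι : Type*) := EuclideanSpace ℂ (Finset ι × Finset ι)

namespace PairSpace

open Finset

variable {ι : Type*}

variable (ι) in
def bidegree (k₁ k₂ : ℕ) : Submodule ℂ (PairSpace ι) where
  carrier := {x | ∀ p : Finset ι × Finset ι, ¬(#p.1 = k₁ ∧ #p.2 = k₂) → x p = 0}
  add_mem' hx hy p hp := by simp [hx p hp, hy p hp]
  zero_mem' _ _ := rfl
  smul_mem' c x hx p hp := by simp [hx p hp]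

def bidegreeEquiv (k₁ k₂ : ℕ) :
    bidegree ι k₁ k₂ ≃ₗ[ℂ] ({p : Finset ι × Finset ι // #p.1 = k₁ ∧ #p.2 = k₂} → ℂ) where
  toFun x p := (x : PairSpace ι) p
  invFun f := ⟨WithLp.toLp 2 fun p => if h : #p.1 = k₁ ∧ #p.2 = k₂ then f ⟨p, h⟩ else 0,
    fun _ hp => dif_neg hp⟩
  map_add' _ _ := rfl
  map_smul' _ _ := rfl
  left_inv x := by
    ext p
    by_cases h : #p.1 = k₁ ∧ #p.2 = k₂
    · exact dif_pos h
    · exact (dif_neg h).trans (x.2 p h).symm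
  right_inv f := funext fun p => dif_pos p.2

theorem finrank_bidegree [Fintype ι] (k₁ k₂ : ℕ) : finrank ℂ (bidegree ι k₁ k₂) =
    (Fintype.card ι).choose k₁ * (Fintype.card ι).choose k₂ := by
  rw [(bidegreeEquiv k₁ k₂).finrank_eq, Module.finrank_fintype_fun_eq_card,
    Fintype.card_congr (Equiv.subtypeProdEquivProd (p := fun s : Finset ι => #s = k₁)
      (q := fun s : Finset ι => #s = k₂)), Fintype.card_prod, Fintype.card_finset_len,
    Fintype.card_finset_len]

variable [DecidableEq ι]

def insertBoth (i : ι) (p : Finset ι × Finset ι) : Finset ι × Finset ι :=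
  (insert i p.1, insert i p.2)

def eraseBoth (i : ι) (p : Finset ι × Finset ι) : Finset ι × Finset ι :=
  (p.1.erase i, p.2.erase i)

noncomputable def raiseAt (i : ι) : PairSpace ι →ₗ[ℂ] PairSpace ι where
  toFun x := WithLp.toLp 2 fun q => if i ∈ q.1 ∧ i ∈ q.2 then x (eraseBoth i q) else 0
  map_add' x y := by ext q; by_cases h : i ∈ q.1 ∧ i ∈ q.2 <;> simp [h]
  map_smul' c x := by ext q; by_cases h : i ∈ q.1 ∧ i ∈ q.2 <;> simp [h]

noncomputable def lowerAt (i : ι) : PairSpace ι →ₗ[ℂ] PairSpace ι where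
  toFun x := WithLp.toLp 2 fun p => if i ∉ p.1 ∧ i ∉ p.2 then x (insertBoth i p) else 0
  map_add' x y := by ext p; by_cases h : i ∉ p.1 ∧ i ∉ p.2 <;> simp [h]
  map_smul' c x := by ext p; by_cases h : i ∉ p.1 ∧ i ∉ p.2 <;> simp [h]

theorem raiseAt_apply (i : ι) (x : PairSpace ι) (q : Finset ι × Finset ι) :
    raiseAt i x q = if i ∈ q.1 ∧ i ∈ q.2 then x (eraseBoth i q) else 0 := rfl

theorem lowerAt_apply (i : ι) (x : PairSpace ι) (p : Finset ι × Finset ι) :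
    lowerAt i x p = if i ∉ p.1 ∧ i ∉ p.2 then x (insertBoth i p) else 0 := rfl

theorem lowerAt_raiseAt_apply (i : ι) (x : PairSpace ι) (p : Finset ι × Finset ι) :
    lowerAt i (raiseAt i x) p = if i ∉ p.1 ∧ i ∉ p.2 then x p else 0 := by
  rw [lowerAt_apply, raiseAt_apply]
  split_ifs <;> simp_all [insertBoth, eraseBoth]

theorem raiseAt_lowerAt_apply (i : ι) (x : PairSpace ι) (p : Finset ι × Finset ι) :
    raiseAt i (lowerAt i x) p = if i ∈ p.1 ∧ i ∈ p.2 then x p else 0 := by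
  rw [raiseAt_apply, lowerAt_apply]
  split_ifs <;> simp_all [insertBoth, eraseBoth]

theorem lowerAt_raiseAt_of_ne {i j : ι} (hij : i ≠ j) (x : PairSpace ι) :
    lowerAt j (raiseAt i x) = raiseAt i (lowerAt j x) := by
  ext p
  simp only [lowerAt_apply, raiseAt_apply, insertBoth, eraseBoth, mem_insert, mem_erase]
  have hji := hij.symm
  split_ifs <;> simp_all [erase_insert_of_ne hji]

variable [Fintype ι]

theorem sum_insertBoth_eq_sum_eraseBoth {M : Type*} [AddCommMonoid M] (i : ι)
    (h : Finset ι × Finset ι → Finset ι × Finset ι → M) :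
    ∑ p, (if i ∉ p.1 ∧ i ∉ p.2 then h p (insertBoth i p) else 0) =
      ∑ q, (if i ∈ q.1 ∧ i ∈ q.2 then h (eraseBoth i q) q else 0) := by
  rw [← sum_filter, ← sum_filter]
  refine sum_nbij' (insertBoth i) (eraseBoth i) ?_ ?_ ?_ ?_ ?_ <;>
    intro p hp <;> simp only [mem_filter, mem_univ, true_and] at hp
  · simp [insertBoth]
  · simp [eraseBoth]
  · simp [insertBoth, eraseBoth, erase_insert hp.1, erase_insert hp.2]
  · simp [insertBoth, eraseBoth, insert_erase hp.1, insert_erase hp.2]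
  · simp [insertBoth, eraseBoth, erase_insert hp.1, erase_insert hp.2]

theorem inner_raiseAt_left (i : ι) (x y : PairSpace ι) :
    inner ℂ (raiseAt i x) y = inner ℂ x (lowerAt i y) := by
  simp only [PiLp.inner_apply, RCLike.inner_apply, raiseAt_apply, lowerAt_apply]
  simpa [apply_ite, mul_ite] using
    (sum_insertBoth_eq_sum_eraseBoth i fun p q => y q * (starRingEnd ℂ) (x p)).symm

noncomputable def raise : PairSpace ι →ₗ[ℂ] PairSpace ι := ∑ i, raiseAt i

noncomputable def lower : PairSpace ι →ₗ[ℂ] PairSpace ι := ∑ i, lowerAt i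

theorem raise_apply (x : PairSpace ι) (q : Finset ι × Finset ι) :
    raise x q = ∑ i, raiseAt i x q := by
  simp [raise, WithLp.ofLp_sum]

theorem lower_apply (x : PairSpace ι) (p : Finset ι × Finset ι) :
    lower x p = ∑ i, lowerAt i x p := by
  simp [lower, WithLp.ofLp_sum]

theorem inner_raise_left (x y : PairSpace ι) :
    inner ℂ (raise x) y = inner ℂ x (lower y) := by
  simp only [raise, lower, LinearMap.sum_apply, sum_inner, inner_sum, inner_raiseAt_left]

theorem inner_lower_left (x y : PairSpace ι) :
    inner ℂ (lower x) y = inner ℂ x (raise y) := by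
  rw [← inner_conj_symm, ← inner_raise_left, inner_conj_symm]

theorem lower_raise_sub_raise_lower (x : PairSpace ι) :
    lower (raise x) - raise (lower x) =
      ∑ i, (lowerAt i (raiseAt i x) - raiseAt i (lowerAt i x)) := by
  simp only [raise, lower, LinearMap.sum_apply, map_sum]
  rw [sum_comm, ← sum_sub_distrib]
  refine sum_congr rfl fun i _ => ?_
  rw [← sum_sub_distrib, sum_eq_single i]
  · intro j _ hji
    rw [lowerAt_raiseAt_of_ne hji, sub_self]
  · simp

theorem lower_raise_apply (x : PairSpace ι) (p : Finset ι × Finset ι) :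
    lower (raise x) p = raise (lower x) p + ((Fintype.card ι : ℂ) - #p.1 - #p.2) * x p := by
  have h := congrArg (fun y => y p) (lower_raise_sub_raise_lower x)
  simp only [WithLp.ofLp_sub, WithLp.ofLp_sum, Pi.sub_apply, Finset.sum_apply,
    lowerAt_raiseAt_apply, raiseAt_lowerAt_apply, sum_sub_distrib, sum_ite, sum_const_zero,
    add_zero, sum_const, nsmul_eq_mul] at h
  have hout : #{i | i ∉ p.1 ∧ i ∉ p.2} = Fintype.card ι - #(p.1 ∪ p.2) := by
    rw [← card_compl]; congr 1; ext; simp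
  have hin : #{i | i ∈ p.1 ∧ i ∈ p.2} = #(p.1 ∩ p.2) := by
    congr 1; ext; simp
  rw [hout, hin, Nat.cast_sub (card_le_univ _)] at h
  rw [← sub_eq_iff_eq_add', h]
  have hcard : (#(p.1 ∪ p.2) : ℂ) + #(p.1 ∩ p.2) = #p.1 + #p.2 := by
    exact_mod_cast card_union_add_card_inter p.1 p.2
  linear_combination (-x p) * hcard

variable {k₁ k₂ : ℕ}

theorem raise_mem_bidegree {x : PairSpace ι} (hx : x ∈ bidegree ι k₁ k₂) :
    raise x ∈ bidegree ι (k₁ + 1) (k₂ + 1) := by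
  intro q hq
  rw [raise_apply]
  refine sum_eq_zero fun i _ => ?_
  rw [raiseAt_apply]
  split_ifs with hi
  · refine hx _ fun hcard => hq ?_
    simp only [eraseBoth, card_erase_of_mem hi.1, card_erase_of_mem hi.2] at hcard
    have := card_pos.mpr ⟨i, hi.1⟩
    have := card_pos.mpr ⟨i, hi.2⟩
    omega
  · rfl

theorem lower_mem_bidegree {x : PairSpace ι} (hx : x ∈ bidegree ι (k₁ + 1) (k₂ + 1)) :
    lower x ∈ bidegree ι k₁ k₂ := by
  intro p hp
  rw [lower_apply]
  refine sum_eq_zero fun i _ => ?_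
  rw [lowerAt_apply]
  split_ifs with hi
  · refine hx _ fun hcard => hp ?_
    simp only [insertBoth, card_insert_of_notMem hi.1, card_insert_of_notMem hi.2] at hcard
    omega
  · rfl

theorem lower_raise_of_mem_bidegree {x : PairSpace ι} (hx : x ∈ bidegree ι k₁ k₂) :
    lower (raise x) = raise (lower x) + ((Fintype.card ι : ℂ) - k₁ - k₂) • x := by
  ext p
  rw [lower_raise_apply, WithLp.ofLp_add, Pi.add_apply, WithLp.ofLp_smul, Pi.smul_apply,
    smul_eq_mul]
  by_cases hp : #p.1 = k₁ ∧ #p.2 = k₂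
  · rw [hp.1, hp.2]
  · rw [hx p hp, mul_zero, mul_zero]

theorem eq_zero_of_lower_raise_eq_zero (hk : k₁ + k₂ < Fintype.card ι) {x : PairSpace ι}
    (hx : x ∈ bidegree ι k₁ k₂) (h : lower (raise x) = 0) : x = 0 := by
  refine eq_zero_of_comp_add_smul_eq_zero inner_lower_left
    (c := Fintype.card ι - k₁ - k₂) (by rify at hk; linarith) ?_
  rw [← h, lower_raise_of_mem_bidegree hx]
  push_cast
  rfl

theorem eq_zero_of_raise_lower_eq_zero (hk : Fintype.card ι < k₁ + k₂) {x : PairSpace ι}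
    (hx : x ∈ bidegree ι k₁ k₂) (h : raise (lower x) = 0) : x = 0 := by
  refine eq_zero_of_comp_add_smul_eq_zero inner_raise_left
    (c := k₁ + k₂ - Fintype.card ι) (by rify at hk; linarith) ?_
  rw [lower_raise_of_mem_bidegree hx, h, zero_add, ← add_smul]
  convert zero_smul ℂ x using 2
  push_cast
  ring

variable (k₁ k₂) in
noncomputable def raiseOn : bidegree ι k₁ k₂ →ₗ[ℂ] bidegree ι (k₁ + 1) (k₂ + 1) :=
  raise.restrict fun _ => raise_mem_bidegree

variable (k₁ k₂) in
noncomputable def lowerOn : bidegree ι (k₁ + 1) (k₂ + 1) →ₗ[ℂ] bidegree ι k₁ k₂ :=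
  lower.restrict fun _ => lower_mem_bidegree

theorem raiseOn_injective (hk : k₁ + k₂ < Fintype.card ι) :
    Function.Injective (raiseOn (ι := ι) k₁ k₂) := by
  rw [← LinearMap.ker_eq_bot, LinearMap.ker_eq_bot']
  intro x hx
  have h : raise (x : PairSpace ι) = 0 := congrArg Subtype.val hx
  exact Subtype.ext (eq_zero_of_lower_raise_eq_zero hk x.2 (by rw [h, map_zero]))

theorem raiseOn_surjective (hk : Fintype.card ι ≤ k₁ + k₂ + 1) :
    Function.Surjective (raiseOn (ι := ι) k₁ k₂) := by
  have hinj : Function.Injective (raiseOn (ι := ι) k₁ k₂ ∘ₗ lowerOn k₁ k₂) := by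
    rw [← LinearMap.ker_eq_bot, LinearMap.ker_eq_bot']
    intro y hy
    exact Subtype.ext (eq_zero_of_raise_lower_eq_zero (by omega) y.2 (congrArg Subtype.val hy))
  have hsurj := LinearMap.injective_iff_surjective.mp hinj
  rw [LinearMap.coe_comp] at hsurj
  exact hsurj.of_comp

end PairSpace

open PairSpace

local notation "Λ" n:max => ExteriorAlgebra ℂ ((Fin n ⊕ Fin n) → ℂ)

/-- Mathlib's monomial basis of the exterior algebra needs a linear order on the index type; only
signs depend on it, and they are never computed below. -/
noncomputable def lexBasis (n : ℕ) : Basis (Fin n ⊕ₗ Fin n) ℂ ((Fin n ⊕ Fin n) → ℂ) :=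
  (Pi.basisFun ℂ (Fin n ⊕ Fin n)).reindex toLex

def lexSupport {n : ℕ} (s t : Finset (Fin n)) : Finset (Fin n ⊕ₗ Fin n) :=
  (s.disjSum t).map toLex.toEmbedding

section

variable {n : ℕ}

theorem lexBasis_toLex (x : Fin n ⊕ Fin n) : lexBasis n (toLex x) = Pi.single x 1 := by
  simp [lexBasis]

@[simp] theorem mem_lexSupport {s t : Finset (Fin n)} {x : Fin n ⊕ₗ Fin n} :
    x ∈ lexSupport s t ↔ ofLex x ∈ s.disjSum t :=
  Finset.mem_map_equiv

theorem lexSupport_union (s t s' t' : Finset (Fin n)) :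
    lexSupport (s ∪ s') (t ∪ t') = lexSupport s t ∪ lexSupport s' t' := by
  ext x
  obtain ⟨i | i, rfl⟩ := toLex.surjective x <;> simp

theorem disjoint_lexSupport {s t s' t' : Finset (Fin n)} :
    Disjoint (lexSupport s t) (lexSupport s' t') ↔ Disjoint s s' ∧ Disjoint t t' := by
  rw [lexSupport, lexSupport, Finset.disjoint_map]
  simp only [Finset.disjoint_left, Sum.forall, Finset.inl_mem_disjSum, Finset.inr_mem_disjSum]

theorem lexSupport_injective :
    Function.Injective fun p : Finset (Fin n) × Finset (Fin n) => lexSupport p.1 p.2 := by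
  intro p q h
  obtain ⟨h₁, h₂⟩ := Finset.disjSum_inj.mp (Finset.map_injective _ h)
  exact Prod.ext h₁ h₂

noncomputable def omegaTerm (n : ℕ) (i : Fin n) : Λ n := alphaV n i * betaV n i

theorem OmegaV_eq_sum_omegaTerm : OmegaV n = ∑ i, omegaTerm n i := rfl

theorem exists_omegaTerm_eq_smul_basis (i : Fin n) :
    ∃ u : ℂˣ, omegaTerm n i = u • (lexBasis n).ExteriorAlgebra (lexSupport {i} {i}) := by
  have hdisj : Disjoint ({toLex (Sum.inl i)} : Finset (Fin n ⊕ₗ Fin n)) {toLex (Sum.inr i)} := by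
    simp
  obtain ⟨u, hu⟩ := ExteriorAlgebra.exists_basis_mul_of_disjoint (lexBasis n) hdisj
  refine ⟨u, ?_⟩
  have hsupp : lexSupport {i} {i} = {toLex (Sum.inl i)} ∪ {toLex (Sum.inr i)} := by
    ext x
    obtain ⟨j | j, rfl⟩ := toLex.surjective x <;> simp
  rw [hsupp, ← hu, ExteriorAlgebra.basis_singleton, ExteriorAlgebra.basis_singleton,
    lexBasis_toLex, lexBasis_toLex, omegaTerm, alphaV, betaV]

theorem omegaTerm_commute (i j : Fin n) : Commute (omegaTerm n i) (omegaTerm n j) :=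
  .mul_left (ExteriorAlgebra.ι_commute_ι_mul_ι _ _ _) (ExteriorAlgebra.ι_commute_ι_mul_ι _ _ _)

theorem omegaTerm_mul_basis_eq_zero_of_not_disjoint {i : Fin n} {W : Finset (Fin n ⊕ₗ Fin n)}
    (h : ¬Disjoint (lexSupport {i} {i}) W) :
    omegaTerm n i * (lexBasis n).ExteriorAlgebra W = 0 := by
  obtain ⟨u, hu⟩ := exists_omegaTerm_eq_smul_basis i
  rw [hu, smul_mul_assoc, ExteriorAlgebra.basis_mul_eq_zero_of_not_disjoint _ h, smul_zero]

theorem exists_omegaTerm_mul_basis {i : Fin n} {W : Finset (Fin n ⊕ₗ Fin n)}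
    (h : Disjoint (lexSupport {i} {i}) W) :
    ∃ u : ℂˣ, omegaTerm n i * (lexBasis n).ExteriorAlgebra W =
      u • (lexBasis n).ExteriorAlgebra (lexSupport {i} {i} ∪ W) := by
  obtain ⟨u, hu⟩ := exists_omegaTerm_eq_smul_basis i
  obtain ⟨v, hv⟩ := ExteriorAlgebra.exists_basis_mul_of_disjoint (lexBasis n) h
  exact ⟨u * v, by rw [hu, smul_mul_assoc, hv, smul_smul]⟩

theorem pairwise_commute_omegaTerm (s : Set (Fin n)) :
    s.Pairwise (Function.onFun Commute (omegaTerm n)) :=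
  fun i _ j _ _ => omegaTerm_commute i j

noncomputable def omegaProd (A : Finset (Fin n)) : Λ n :=
  A.noncommProd (omegaTerm n) (pairwise_commute_omegaTerm _)

theorem omegaProd_insert {i : Fin n} {A : Finset (Fin n)} (h : i ∉ A) :
    omegaProd (insert i A) = omegaTerm n i * omegaProd A :=
  Finset.noncommProd_insert_of_notMem _ _ _ _ h

theorem exists_omegaProd_mul_basis (A : Finset (Fin n)) {W : Finset (Fin n ⊕ₗ Fin n)}
    (h : Disjoint (lexSupport A A) W) :
    ∃ u : ℂˣ, omegaProd A * (lexBasis n).ExteriorAlgebra W =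
      u • (lexBasis n).ExteriorAlgebra (lexSupport A A ∪ W) := by
  induction A using Finset.induction_on with
  | empty =>
    refine ⟨1, ?_⟩
    rw [omegaProd, Finset.noncommProd_empty]
    simp [lexSupport]
  | insert i A hi ih =>
    have hsupp : lexSupport (insert i A) (insert i A) = lexSupport {i} {i} ∪ lexSupport A A := by
      rw [Finset.insert_eq, lexSupport_union]
    rw [hsupp, Finset.disjoint_union_left] at h
    obtain ⟨u, hu⟩ := ih h.2
    obtain ⟨v, hv⟩ := exists_omegaTerm_mul_basis (i := i) (W := lexSupport A A ∪ W)
      (Finset.disjoint_union_right.mpr ⟨disjoint_lexSupport.mpr (by simpa using hi), h.1⟩)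
    refine ⟨u * v, ?_⟩
    rw [omegaProd_insert hi, mul_assoc, hu, mul_smul_comm, hv, smul_smul, mul_comm u, hsupp,
      Finset.union_assoc]

noncomputable def omegaMonomial (p : Finset (Fin n) × Finset (Fin n)) : Λ n :=
  omegaProd (p.1 ∩ p.2) * (lexBasis n).ExteriorAlgebra (lexSupport (p.1 \ p.2) (p.2 \ p.1))

theorem exists_omegaMonomial_eq_smul_basis (p : Finset (Fin n) × Finset (Fin n)) :
    ∃ u : ℂˣ, omegaMonomial p = u • (lexBasis n).ExteriorAlgebra (lexSupport p.1 p.2) := by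
  have hdisj :
      Disjoint (lexSupport (p.1 ∩ p.2) (p.1 ∩ p.2)) (lexSupport (p.1 \ p.2) (p.2 \ p.1)) :=
    disjoint_lexSupport.mpr
      ⟨by simp +contextual [Finset.disjoint_left], by simp +contextual [Finset.disjoint_left]⟩
  obtain ⟨u, hu⟩ := exists_omegaProd_mul_basis _ hdisj
  refine ⟨u, ?_⟩
  have h₁ : p.1 ∩ p.2 ∪ p.1 \ p.2 = p.1 := by rw [Finset.union_comm, Finset.sdiff_union_inter]
  have h₂ : p.1 ∩ p.2 ∪ p.2 \ p.1 = p.2 := by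
    rw [Finset.inter_comm, Finset.union_comm, Finset.sdiff_union_inter]
  rw [omegaMonomial, hu, ← lexSupport_union, h₁, h₂]

theorem omegaTerm_mul_omegaMonomial (i : Fin n) (p : Finset (Fin n) × Finset (Fin n)) :
    omegaTerm n i * omegaMonomial p =
      if i ∉ p.1 ∧ i ∉ p.2 then omegaMonomial (insertBoth i p) else 0 := by
  split_ifs with hi
  · rw [omegaMonomial, omegaMonomial, ← mul_assoc, ← omegaProd_insert (by simp [hi.1]),
      Finset.insert_inter_distrib, insertBoth, Finset.insert_sdiff_insert,
      Finset.insert_sdiff_insert, Finset.sdiff_insert_of_notMem hi.1,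
      Finset.sdiff_insert_of_notMem hi.2]
  · obtain ⟨u, hu⟩ := exists_omegaMonomial_eq_smul_basis p
    have hmeet : ¬Disjoint (lexSupport {i} {i}) (lexSupport p.1 p.2) := by
      rwa [disjoint_lexSupport, Finset.disjoint_singleton_left, Finset.disjoint_singleton_left]
    rw [hu, mul_smul_comm, omegaTerm_mul_basis_eq_zero_of_not_disjoint hmeet, smul_zero]

theorem linearIndependent_omegaMonomial : LinearIndependent ℂ (omegaMonomial (n := n)) := by
  choose u hu using exists_omegaMonomial_eq_smul_basis (n := n)
  rw [show omegaMonomial = u • ((lexBasis n).ExteriorAlgebra ∘ fun p => lexSupport p.1 p.2) from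
    funext hu]
  exact ((lexBasis n).ExteriorAlgebra.linearIndependent.comp _ lexSupport_injective).units_smul u

theorem exists_sortedMonomial_eq_smul_omegaMonomial (s t : Finset (Fin n)) :
    ∃ u : ℂˣ, ((s.sort (· ≤ ·)).map (alphaV n)).prod * ((t.sort (· ≤ ·)).map (betaV n)).prod =
      u • omegaMonomial (s, t) := by
  set L : List (Fin n ⊕ₗ Fin n) :=
    (s.sort (· ≤ ·)).map (toLex ∘ Sum.inl) ++ (t.sort (· ≤ ·)).map (toLex ∘ Sum.inr) with hL
  have hnodup : L.Nodup := by
    refine List.Nodup.append ((s.sort_nodup _).map ?_) ((t.sort_nodup _).map ?_) ?_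
    · exact toLex.injective.comp Sum.inl_injective
    · exact toLex.injective.comp Sum.inr_injective
    · simp [List.disjoint_left]
  have hsupp : L.toFinset = lexSupport s t := by
    ext x
    obtain ⟨i | i, rfl⟩ := toLex.surjective x <;> simp [hL]
  obtain ⟨v, hv⟩ := ExteriorAlgebra.exists_list_prod_eq_smul_basis (lexBasis n) hnodup
  obtain ⟨w, hw⟩ := exists_omegaMonomial_eq_smul_basis (s, t)
  refine ⟨v * w⁻¹, ?_⟩
  rw [hw, smul_smul, inv_mul_cancel_right, ← hsupp, ← hv, hL, List.map_append, List.prod_append,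
    List.map_map, List.map_map]
  congr 3 <;> funext i <;> simp [alphaV, betaV, lexBasis_toLex]

theorem omegaMonomial_mem_Vkk {s t : Finset (Fin n)} {k₁ k₂ : ℕ} (hs : s.card = k₁)
    (ht : t.card = k₂) : omegaMonomial (s, t) ∈ Vkk n k₁ k₂ := by
  obtain ⟨u, hu⟩ := exists_sortedMonomial_eq_smul_omegaMonomial s t
  rw [← inv_smul_smul u (omegaMonomial (s, t)), ← hu]
  exact Submodule.smul_mem _ _ (Submodule.subset_span ⟨s, t, hs, ht, rfl⟩)

variable (n) in
noncomputable def toExterior : PairSpace (Fin n) →ₗ[ℂ] Λ n :=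
  Fintype.linearCombination ℂ omegaMonomial ∘ₗ (WithLp.linearEquiv 2 ℂ _).toLinearMap

theorem toExterior_apply (x : PairSpace (Fin n)) :
    toExterior n x = ∑ p, x p • omegaMonomial p :=
  Fintype.linearCombination_apply _ _ _

theorem toExterior_injective : Function.Injective (toExterior n) :=
  (linearIndependent_iff_injective_fintypeLinearCombination.mp
    linearIndependent_omegaMonomial).comp (WithLp.linearEquiv 2 ℂ _).injective

theorem omegaTerm_mul_toExterior (i : Fin n) (x : PairSpace (Fin n)) :
    omegaTerm n i * toExterior n x = toExterior n (raiseAt i x) := by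
  simp only [toExterior_apply, Finset.mul_sum, mul_smul_comm, omegaTerm_mul_omegaMonomial,
    raiseAt_apply, smul_ite, smul_zero, ite_smul, zero_smul]
  exact sum_insertBoth_eq_sum_eraseBoth i fun p q => x p • omegaMonomial q

theorem OmegaV_mul_toExterior (x : PairSpace (Fin n)) :
    OmegaV n * toExterior n x = toExterior n (raise x) := by
  simp only [OmegaV_eq_sum_omegaTerm, Finset.sum_mul, omegaTerm_mul_toExterior, raise,
    LinearMap.sum_apply, map_sum]

theorem Vkk_eq_map_toExterior (k₁ k₂ : ℕ) :
    Vkk n k₁ k₂ = (bidegree (Fin n) k₁ k₂).map (toExterior n) := by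
  apply le_antisymm
  · rw [Vkk, Submodule.span_le]
    rintro _ ⟨s, t, hs, ht, rfl⟩
    obtain ⟨u, hu⟩ := exists_sortedMonomial_eq_smul_omegaMonomial s t
    refine ⟨u • PiLp.single 2 (s, t) 1, ?_, ?_⟩
    · refine Submodule.smul_mem _ _ fun p hp => ?_
      rw [PiLp.single_apply, if_neg]
      rintro rfl
      exact hp ⟨hs, ht⟩
    · rw [hu, LinearMap.map_smul_of_tower, toExterior_apply,
        Finset.sum_eq_single (s, t) (fun p _ hp => by simp [hp]) (by simp)]
      simp
  · rintro _ ⟨x, hx, rfl⟩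
    rw [toExterior_apply]
    refine Submodule.sum_mem _ fun p _ => ?_
    by_cases hp : p.1.card = k₁ ∧ p.2.card = k₂
    · exact Submodule.smul_mem _ _ (omegaMonomial_mem_Vkk hp.1 hp.2)
    · rw [hx p hp, zero_smul]
      exact Submodule.zero_mem _

variable (n) in
theorem Kdim_one_eq_finrank_ker_raiseOn (k₁ k₂ : ℕ) :
    Kdim 1 k₁ k₂ n = finrank ℂ (LinearMap.ker (raiseOn (ι := Fin n) k₁ k₂)) := by
  let e : bidegree (Fin n) k₁ k₂ ≃ₗ[ℂ] Vkk n k₁ k₂ :=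
    (Submodule.equivMapOfInjective _ toExterior_injective _).trans
      (LinearEquiv.ofEq _ _ (Vkk_eq_map_toExterior k₁ k₂).symm)
  have hcomm : (LinearMap.mulLeft ℂ (OmegaV n ^ 1) ∘ₗ (Vkk n k₁ k₂).subtype) ∘ₗ e.toLinearMap =
      (toExterior n ∘ₗ (bidegree (Fin n) (k₁ + 1) (k₂ + 1)).subtype) ∘ₗ
        raiseOn k₁ k₂ := by
    ext x
    simp [e, OmegaV_mul_toExterior, raiseOn]
  have hinj : LinearMap.ker
      (toExterior n ∘ₗ (bidegree (Fin n) (k₁ + 1) (k₂ + 1)).subtype) = ⊥ :=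
    LinearMap.ker_eq_bot.mpr (toExterior_injective.comp Subtype.val_injective)
  rw [Kdim, ← LinearMap.ker_comp_of_ker_eq_bot _ hinj, ← hcomm, LinearMap.ker_comp e.toLinearMap,
    Submodule.comap_equiv_eq_map_symm, LinearEquiv.finrank_map_eq]

end

theorem Kdim_one_eq_zero {n k₁ k₂ : ℕ} (hk : k₁ + k₂ < n) : Kdim 1 k₁ k₂ n = 0 := by
  rw [Kdim_one_eq_finrank_ker_raiseOn, LinearMap.ker_eq_bot.mpr
    (raiseOn_injective (by simpa using hk)), finrank_bot]

theorem Kdim_one_add_choose_mul_choose {n k₁ k₂ : ℕ} (hk : n ≤ k₁ + k₂ + 1) :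
    Kdim 1 k₁ k₂ n + n.choose (k₁ + 1) * n.choose (k₂ + 1) = n.choose k₁ * n.choose k₂ := by
  have h := LinearMap.finrank_range_add_finrank_ker (raiseOn (ι := Fin n) k₁ k₂)
  rw [LinearMap.range_eq_top.mpr (raiseOn_surjective (by simpa using hk)), finrank_top,
    finrank_bidegree, finrank_bidegree, Fintype.card_fin] at h
  rw [Kdim_one_eq_finrank_ker_raiseOn]
  omega

theorem Kdim_one_diag_general (n : ℕ) (k : ℕ) :
    (2 * k < n → Kdim 1 k k n = 0) ∧
    (n ≤ 2 * k →
      (Kdim 1 k k n : ℤ) = (n.choose k : ℤ) ^ 2 - (n.choose (k + 1) : ℤ) ^ 2) := by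
  refine ⟨fun hk => Kdim_one_eq_zero (by omega), fun hk => ?_⟩
  have h := Kdim_one_add_choose_mul_choose (n := n) (k₁ := k) (k₂ := k) (by omega)
  rw [eq_sub_iff_add_eq, sq, sq]
  exact_mod_cast h

/-- `K(1,k,k,n) = 0` if `2k < n`, and
`K(1,k,k,n) = C(n,k)² − C(n,k+1)²` if `2k ≥ n`. -/
theorem Kdim_one_diag (n : ℕ) (hn : 1 ≤ n) (k : ℕ) :
    (2 * k < n → Kdim 1 k k n = 0) ∧
    (n ≤ 2 * k →
      (Kdim 1 k k n : ℤ) = (n.choose k : ℤ) ^ 2 - (n.choose (k + 1) : ℤ) ^ 2) :=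
  Kdim_one_diag_general n k
end

section
/- Let {y*, x_1*,…,x_n*, y_1*,…,y_n*} be the dual basis of f* corresponding to the basis {y, x_1,…,x_n, y_1,…,y_n} of f. Then: (1) the Chevalley–Eilenberg differential ∂_k vanishes on the span of all wedge products y* ∧ ξ_1 ∧ … ∧ ξ_{k−1} with ξ_1,…,ξ_{k−1} ∈ {x_1*,…,x_n*,y_1*,…,y_n*}; (2) for j + l = k, letting W_{j,l} denote the span of the monomials x*_{i_1} ∧ … ∧ x*_{i_j} ∧ y*_{r_1} ∧ … ∧ y*_{r_l} (i_1 < … < i_j, r_1 < … < r_l), one has ∂_k(W_{j,l}) = 0 if j = l, while if j ≠ l the restriction of ∂_k to W_{j,l} is injective with image y* ∧ W_{j,l}. -/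
/-!
Put `y* = b.coord (inl ())` and `D = ad y`. Since the `x_i, y_i` span an abelian ideal, the
bracket of `f` is `⁅u, w⁆ = y*(u) D w - y*(w) D u`, and for such a bracket the
Chevalley–Eilenberg differential is `∂ω = -y* ∧ (D · ω)`, where `D` acts on forms as a
derivation. The dual basis consists of eigenvectors of `D`, with eigenvalues `0` on `y*`, `1` on
the `x_i*` and `-1` on the `y_i*`, so `D · ω = (j - l) ω` on `W_{j,l}` and
`∂ω = (l - j) y* ∧ ω` there. This vanishes for `j = l`, and also when `ω` already contains `y*`.
For `j ≠ l` it is injective because `(y* ∧ ω)(y, u) = ω u` for forms `ω` killed by `y`.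
-/

open Module

/-- Chevalley–Eilenberg differential with trivial coefficients. -/
noncomputable def ceDiff (g : Type) [LieRing g] [LieAlgebra ℂ g] (k : ℕ) :
    (AlternatingMap ℂ g ℂ (Fin k)) →ₗ[ℂ] ((Fin (k+1) → g) → ℂ) where
  toFun f x := ∑ i : Fin (k+1), ∑ j : Fin (k+1),
    if i < j then
      (-1 : ℂ) ^ (i.val + j.val) *
        f (fun m => if m.val = 0 then ⁅x i, x j⁆
            else x ⟨if m.val - 1 < i.val then m.val - 1
                    else if m.val < j.val then m.val
                    else m.val + 1, by have := m.isLt; split_ifs <;> omega⟩)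
    else 0
  map_add' f f' := by
    funext x
    simp only [Pi.add_apply]
    rw [← Finset.sum_add_distrib]
    refine Finset.sum_congr rfl fun i _ => ?_
    rw [← Finset.sum_add_distrib]
    refine Finset.sum_congr rfl fun j _ => ?_
    by_cases h : i < j
    · simp [h, AlternatingMap.add_apply, mul_add]
    · simp [h]
  map_smul' c f := by
    funext x
    simp only [Pi.smul_apply, smul_eq_mul, RingHom.id_apply, Finset.mul_sum]
    refine Finset.sum_congr rfl fun i _ => ?_
    refine Finset.sum_congr rfl fun j _ => ?_
    by_cases h : i < j
    · simp only [h, if_true, AlternatingMap.smul_apply, smul_eq_mul]; ring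
    · simp [h]

/-- The `k`-th Betti number of a Lie algebra. -/
noncomputable def betti (g : Type) [LieRing g] [LieAlgebra ℂ g] (k : ℕ) : ℤ :=
  (finrank ℂ (LinearMap.ker (ceDiff g k)) : ℤ) -
    (match k with
     | 0 => (0 : ℤ)
     | (j+1) => (finrank ℂ (LinearMap.range (ceDiff g j)) : ℤ))

/-- The wedge product `ξ_1 ∧ … ∧ ξ_k` of a family of covectors, as the alternating map
`(v_1, …, v_k) ↦ det (ξ_i (v_j))`. -/
noncomputable def wedgeF {g : Type} [AddCommGroup g] [Module ℂ g] {k : ℕ}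
    (ξ : Fin k → (g →ₗ[ℂ] ℂ)) : AlternatingMap ℂ g ℂ (Fin k) :=
  (Matrix.detRowAlternating : AlternatingMap ℂ (Fin k → ℂ) ℂ (Fin k)).compLinearMap
    (LinearMap.pi ξ)

open Finset

namespace AlternatingMap

variable (R M N ι : Type*) [CommSemiring R] [AddCommMonoid M] [Module R M]
  [AddCommMonoid N] [Module R N]

def coeFnLM : AlternatingMap R M N ι →ₗ[R] ((ι → M) → N) where
  toFun φ := ⇑φ
  map_add' _ _ := rfl
  map_smul' _ _ := rfl

end AlternatingMap

theorem LinearMap.image_span_eq_image_span_of_smul {K V V' W : Type*} [Field K]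
    [AddCommGroup V] [Module K V] [AddCommGroup V'] [Module K V'] [AddCommGroup W] [Module K W]
    (L : V →ₗ[K] W) (φ : V' →ₗ[K] W) {c : K} (hc : c ≠ 0) {S : Set V} {S' : Set V'}
    (h : ∀ w ∈ S, ∃ w' ∈ S', L w = c • φ w') (h' : ∀ w' ∈ S', ∃ w ∈ S, L w = c • φ w') :
    L '' Submodule.span K S = φ '' Submodule.span K S' := by
  simp only [← Submodule.map_coe, Submodule.map_span]
  congr 1
  apply le_antisymm <;> rw [Submodule.span_le]
  · rintro _ ⟨w, hw, rfl⟩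
    obtain ⟨w', hw', he⟩ := h w hw
    rw [he]
    exact Submodule.smul_mem _ _ (Submodule.subset_span ⟨w', hw', rfl⟩)
  · rintro _ ⟨w', hw', rfl⟩
    obtain ⟨w, hw, he⟩ := h' w' hw'
    rw [← inv_smul_smul₀ hc (φ w'), ← he]
    exact Submodule.smul_mem _ _ (Submodule.subset_span ⟨w, hw, rfl⟩)

section Forms

variable {R M N : Type*} [CommRing R] [AddCommGroup M] [Module R M] [AddCommGroup N] [Module R N]
  {k : ℕ}

def wedgeLeft (η : M →ₗ[R] R) : ((Fin k → M) → R) →ₗ[R] ((Fin (k + 1) → M) → R) where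
  toFun φ v := ∑ i : Fin (k + 1), (-1) ^ (i : ℕ) * η (v i) * φ (i.removeNth v)
  map_add' φ ψ := by ext v; simp [mul_add, sum_add_distrib]
  map_smul' r φ := by
    ext v
    simp only [Pi.smul_apply, smul_eq_mul, RingHom.id_apply, mul_sum]
    exact sum_congr rfl fun _ _ => by ring

def derivAction (D : M →ₗ[R] M) : ((Fin k → M) → N) →ₗ[R] ((Fin k → M) → N) where
  toFun φ u := ∑ m, φ (Function.update u m (D (u m)))
  map_add' φ ψ := by ext u; simp [sum_add_distrib]
  map_smul' r φ := by ext u; simp [smul_sum]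

theorem wedgeLeft_apply (η : M →ₗ[R] R) (φ : (Fin k → M) → R) (v : Fin (k + 1) → M) :
    wedgeLeft η φ v = ∑ i : Fin (k + 1), (-1) ^ (i : ℕ) * η (v i) * φ (i.removeNth v) := rfl

theorem derivAction_apply (D : M →ₗ[R] M) (φ : (Fin k → M) → N) (u : Fin k → M) :
    derivAction D φ u = ∑ m, φ (Function.update u m (D (u m))) := rfl

theorem wedgeLeft_apply_cons {η : M →ₗ[R] R} {y : M} (hy : η y = 1) {φ : (Fin k → M) → R}
    (hφ : ∀ v m, v m = y → φ v = 0) (u : Fin k → M) : wedgeLeft η φ (Fin.cons y u) = φ u := by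
  rw [wedgeLeft_apply, Fin.sum_univ_succ]
  cases k with
  | zero => simp [hy]
  | succ k =>
    have h (i : Fin (k + 1)) : φ (i.succ.removeNth (Fin.cons y u : Fin (k + 2) → M)) = 0 :=
      hφ _ 0 (by simp [Fin.removeNth_apply])
    simp [hy, h]

theorem AlternatingMap.derivAction_eq_alternatizeUncurryFin (D : M →ₗ[R] M)
    (ω : AlternatingMap R M N (Fin (k + 1))) :
    derivAction D ⇑ω = ⇑(alternatizeUncurryFin (ω.curryLeft ∘ₗ D)) := by
  ext u
  simp [derivAction_apply, alternatizeUncurryFin_apply, ← Fin.insertNth_removeNth, map_insertNth]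

end Forms

theorem Matrix.sum_det_updateRow_mul {n R : Type*} [Fintype n] [DecidableEq n] [CommRing R]
    (A : Matrix n n R) (c : n → R) :
    ∑ m, (A.updateRow m fun q => A m q * c q).det = (∑ q, c q) * A.det := by
  simp only [det_apply, mul_sum]
  rw [sum_comm]
  refine sum_congr rfl fun σ _ => ?_
  have hprod (m : n) : ∏ i, A.updateRow m (fun q => A m q * c q) (σ i) i =
      c (σ.symm m) * ∏ i, A (σ i) i := by
    rw [← Fintype.prod_ite_eq' (σ.symm m) c, ← prod_mul_distrib]
    refine prod_congr rfl fun i _ => ?_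
    by_cases hi : σ i = m
    · subst hi
      simp [mul_comm]
    · simp [hi, Equiv.eq_symm_apply]
  simp only [hprod, ← smul_sum, ← sum_mul, Equiv.sum_comp σ.symm c, mul_smul_comm]

section Wedge

variable {g : Type} [AddCommGroup g] [Module ℂ g] {k : ℕ}

theorem wedgeF_apply (ξ : Fin k → g →ₗ[ℂ] ℂ) (v : Fin k → g) :
    wedgeF ξ v = (Matrix.of fun p q => ξ q (v p)).det := rfl

theorem wedgeF_cons (η : g →ₗ[ℂ] ℂ) (ξ : Fin k → g →ₗ[ℂ] ℂ) :
    ⇑(wedgeF (Fin.cons η ξ)) = wedgeLeft η ⇑(wedgeF ξ) := by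
  ext v
  rw [wedgeF_apply, Matrix.det_succ_column_zero, wedgeLeft_apply]
  refine sum_congr rfl fun i _ => ?_
  simp [wedgeF_apply, Fin.removeNth_apply, Matrix.submatrix]

theorem wedgeF_apply_eq_zero {ξ : Fin k → g →ₗ[ℂ] ℂ} {v : Fin k → g} {m : Fin k}
    (h : ∀ q, ξ q (v m) = 0) : wedgeF ξ v = 0 :=
  Matrix.det_eq_zero_of_row_eq_zero m (by simp [h])

theorem wedgeF_cons_cons_self (η : g →ₗ[ℂ] ℂ) (ξ : Fin k → g →ₗ[ℂ] ℂ) :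
    wedgeF (Fin.cons η (Fin.cons η ξ)) = 0 := by
  ext v
  exact Matrix.det_zero_of_column_eq (i := 0) (j := 1) (by simp) (by simp)

theorem derivAction_wedgeF {D : g →ₗ[ℂ] g} {ξ : Fin k → g →ₗ[ℂ] ℂ} {c : Fin k → ℂ}
    (hξ : ∀ q w, ξ q (D w) = c q * ξ q w) :
    derivAction D ⇑(wedgeF ξ) = (∑ q, c q) • ⇑(wedgeF ξ) := by
  ext u
  rw [derivAction_apply, Pi.smul_apply, smul_eq_mul, wedgeF_apply,
    ← Matrix.sum_det_updateRow_mul]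
  refine sum_congr rfl fun m _ => congrArg Matrix.det ?_
  ext p q
  by_cases hp : p = m
  · subst hp
    simp [hξ, mul_comm]
  · simp [hp]

end Wedge

section ChevalleyEilenberg

variable {g : Type} [LieRing g] [LieAlgebra ℂ g]

-- A pair `i < j` in `Fin (k + 2)` is written as `(i.castSucc, j.succ)` with `i ≤ j`, the indexing
-- of `AlternatingMap.alternatizeUncurryFin_alternatizeUncurryFinLM_comp_apply`.
theorem ceDiff_apply_eq_neg_sum_triangle {k : ℕ} (ω : AlternatingMap ℂ g ℂ (Fin (k + 1)))
    (v : Fin (k + 2) → g) :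
    ceDiff g (k + 1) ω v = -∑ i : Fin (k + 1), ∑ j ≥ i, (-1) ^ (i + j : ℕ) *
      ω (Matrix.vecCons ⁅v i.castSucc, v j.succ⁆ (j.removeNth (i.castSucc.removeNth v))) := by
  simp only [ceDiff, LinearMap.coe_mk, AddHom.coe_mk]
  rw [Fin.sum_univ_castSucc]
  simp only [Fin.sum_univ_succ (n := k + 1), not_lt.2 (Fin.le_last _), if_false, sum_const_zero,
    add_zero, Fin.not_lt_zero, Fin.castSucc_lt_succ_iff, zero_add]
  rw [← Finset.sum_neg_distrib]
  refine sum_congr rfl fun i _ => ?_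
  rw [← sum_filter, Finset.filter_le_eq_Ici, ← Finset.sum_neg_distrib]
  refine sum_congr rfl fun j hj => ?_
  rw [mem_Ici] at hj
  have hsign : (-1 : ℂ) ^ ((i.castSucc : ℕ) + (j.succ : ℕ)) = -(-1) ^ (i + j : ℕ) := by
    simp [pow_succ, ← add_assoc]
  rw [hsign, neg_mul]
  congr 3
  funext m
  refine Fin.cases ?_ (fun m => ?_) m
  · simp
  · simp only [Fin.val_succ, Nat.add_one_ne_zero, if_false, Matrix.cons_val_succ,
      Fin.removeNth_apply]
    congr 1
    ext
    simp only [Fin.succAbove, Fin.lt_def, Fin.val_castSucc]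
    split_ifs <;> simp only [Fin.val_succ, Fin.val_castSucc] at * <;> omega

variable {ys : g →ₗ[ℂ] ℂ} {D : g →ₗ[ℂ] g}

theorem ceDiff_eq_neg_wedgeLeft_derivAction (hbr : ∀ u w : g, ⁅u, w⁆ = ys u • D w - ys w • D u)
    {k : ℕ} (ω : AlternatingMap ℂ g ℂ (Fin k)) :
    ceDiff g k ω = -wedgeLeft ys (derivAction D ⇑ω) := by
  cases k with
  | zero =>
    ext v
    simp [ceDiff, wedgeLeft_apply, derivAction_apply, Fin.lt_def]
  | succ k =>
    ext v
    -- `H a b - H b a = ω ⁅a, b⁆`, so Mathlib's formula for the double uncurrying of `H` is `-∂ω`,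
    -- while unfolding the double uncurrying directly gives `ys ∧ (D · ω)`.
    let H : g →ₗ[ℂ] g →ₗ[ℂ] AlternatingMap ℂ g ℂ (Fin k) := ys.smulRight (ω.curryLeft ∘ₗ D)
    have hH (a b : g) : H a b - H b a = ω.curryLeft ⁅a, b⁆ := by
      simp [H, hbr]
    have hwedge : wedgeLeft ys (derivAction D ⇑ω) v =
        AlternatingMap.alternatizeUncurryFin (AlternatingMap.alternatizeUncurryFinLM ∘ₗ H) v := by
      simp [wedgeLeft_apply, AlternatingMap.derivAction_eq_alternatizeUncurryFin,
        AlternatingMap.alternatizeUncurryFin_apply, H, mul_assoc]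
    rw [ceDiff_apply_eq_neg_sum_triangle, Pi.neg_apply, hwedge,
      AlternatingMap.alternatizeUncurryFin_alternatizeUncurryFinLM_comp_apply]
    congr 1
    refine sum_congr rfl fun i _ => sum_congr rfl fun j _ => ?_
    rw [← AlternatingMap.sub_apply, hH, AlternatingMap.curryLeft_apply_apply]
    simp

theorem ceDiff_wedgeF (hbr : ∀ u w : g, ⁅u, w⁆ = ys u • D w - ys w • D u) {k : ℕ}
    {ξ : Fin k → g →ₗ[ℂ] ℂ} {c : Fin k → ℂ} (hξ : ∀ q w, ξ q (D w) = c q * ξ q w) :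
    ceDiff g k (wedgeF ξ) = -(∑ q, c q) • ⇑(wedgeF (Fin.cons ys ξ)) := by
  rw [ceDiff_eq_neg_wedgeLeft_derivAction hbr, derivAction_wedgeF hξ, map_smul, wedgeF_cons,
    neg_smul]

theorem ceDiff_wedgeF_cons_eq_zero (hbr : ∀ u w : g, ⁅u, w⁆ = ys u • D w - ys w • D u)
    (hys : ∀ w, ys (D w) = 0) {k : ℕ} {ξ : Fin k → g →ₗ[ℂ] ℂ}
    (hξ : ∀ q, ∃ c : ℂ, ∀ w, ξ q (D w) = c * ξ q w) :
    ceDiff g (k + 1) (wedgeF (Fin.cons ys ξ)) = 0 := by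
  choose c hc using hξ
  rw [ceDiff_wedgeF hbr (c := Fin.cons 0 c), wedgeF_cons_cons_self]
  · exact smul_zero _
  intro q w
  cases q using Fin.cases <;> simp [hys, hc]

theorem derivAction_wedgeF_append {j l : ℕ} {ξ : Fin j → g →ₗ[ℂ] ℂ} {η : Fin l → g →ₗ[ℂ] ℂ}
    (hξ : ∀ q w, ξ q (D w) = ξ q w) (hη : ∀ q w, η q (D w) = -η q w) :
    derivAction D ⇑(wedgeF (Fin.append ξ η)) = ((j : ℂ) - l) • ⇑(wedgeF (Fin.append ξ η)) := by
  rw [derivAction_wedgeF (c := Fin.append (fun _ => 1) fun _ => -1)]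
  · simp [Fin.sum_univ_add, sub_eq_add_neg]
  · intro q w
    refine Fin.addCases (fun q => ?_) (fun q => ?_) q <;> simp [hξ, hη]

theorem ceDiff_wedgeF_append (hbr : ∀ u w : g, ⁅u, w⁆ = ys u • D w - ys w • D u) {j l : ℕ}
    {ξ : Fin j → g →ₗ[ℂ] ℂ} {η : Fin l → g →ₗ[ℂ] ℂ}
    (hξ : ∀ q w, ξ q (D w) = ξ q w) (hη : ∀ q w, η q (D w) = -η q w) :
    ceDiff g (j + l) (wedgeF (Fin.append ξ η)) =
      ((l : ℂ) - j) • ⇑(wedgeF (Fin.cons ys (Fin.append ξ η))) := by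
  rw [ceDiff_eq_neg_wedgeLeft_derivAction hbr, derivAction_wedgeF_append hξ hη, map_smul,
    wedgeF_cons, ← neg_smul, neg_sub]

theorem ceDiff_injOn_span (hbr : ∀ u w : g, ⁅u, w⁆ = ys u • D w - ys w • D u) {y : g}
    (hy : ys y = 1) {k : ℕ} {c : ℂ} (hc : c ≠ 0) {S : Set (AlternatingMap ℂ g ℂ (Fin k))}
    (hSD : ∀ ω ∈ S, derivAction D ⇑ω = c • ⇑ω) (hSy : ∀ ω ∈ S, ∀ v m, v m = y → ω v = 0) :
    Set.InjOn (ceDiff g k) (Submodule.span ℂ S) := by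
  refine LinearMap.injOn_of_disjoint_ker subset_rfl
    (Submodule.disjoint_def.2 fun ω hω hker => ?_)
  have hD : derivAction D ⇑ω = c • ⇑ω :=
    LinearMap.eqOn_span' (f := derivAction D ∘ₗ AlternatingMap.coeFnLM ℂ g ℂ (Fin k))
      (g := c • AlternatingMap.coeFnLM ℂ g ℂ (Fin k)) hSD hω
  have hωy (v : Fin k → g) (m : Fin k) (hv : v m = y) : ω v = 0 :=
    LinearMap.eqOn_span' (f := LinearMap.proj v ∘ₗ AlternatingMap.coeFnLM ℂ g ℂ (Fin k))
      (g := 0) (fun ω' hω' => hSy ω' hω' v m hv) hω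
  ext u
  have h := congrFun (LinearMap.mem_ker.1 hker) (Fin.cons y u)
  rw [ceDiff_eq_neg_wedgeLeft_derivAction hbr, hD, map_smul, Pi.neg_apply, Pi.smul_apply,
    wedgeLeft_apply_cons hy hωy] at h
  simpa [hc] using h

end ChevalleyEilenberg

theorem Module.Basis.coord_apply_of_apply_eq_smul {ι K M : Type*} [CommRing K] [AddCommGroup M]
    [Module K M] (b : Basis ι K M) {D : M →ₗ[K] M} {μ : ι → K} (h : ∀ t, D (b t) = μ t • b t)
    (s : ι) (w : M) : b.coord s (D w) = μ s * b.coord s w := by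
  have hD : b.coord s ∘ₗ D = μ s • b.coord s := b.ext fun t => by
    by_cases hts : t = s
    · simp [h, hts]
    · simp [h, Ne.symm hts]
  exact LinearMap.congr_fun hD w

theorem Module.Basis.lie_eq_coord_smul_sub {K L κ : Type*} [CommRing K] [LieRing L]
    [LieAlgebra K L] (b : Basis (Unit ⊕ κ) K L) (h : ∀ s t, ⁅b (.inr s), b (.inr t)⁆ = 0) (u w : L) :
    ⁅u, w⁆ = b.coord (.inl ()) u • ⁅b (.inl ()), w⁆ - b.coord (.inl ()) w • ⁅b (.inl ()), u⁆ := by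
  let B : L →ₗ[K] L →ₗ[K] L := (b.coord (.inl ())).smulRight (LieAlgebra.ad K L (b (.inl ())))
  have hB : (LieAlgebra.ad K L : L →ₗ[K] L →ₗ[K] L) = B - B.flip := by
    refine LinearMap.ext_basis b b ?_
    rintro (⟨⟩ | s) (⟨⟩ | t) <;> simp [B, h]
  simpa [B] using LinearMap.congr_fun₂ hB u w

theorem ceDiff_f_structure_general (n : ℕ)
    (f : Type) [LieRing f] [LieAlgebra ℂ f]
    (b : Basis (Unit ⊕ (Fin n ⊕ Fin n)) ℂ f)
    (y : f) (x : Fin n → f) (yi : Fin n → f)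
    (hy : y = b (Sum.inl ())) (hx : ∀ i, x i = b (Sum.inr (Sum.inl i)))
    (hyi : ∀ i, yi i = b (Sum.inr (Sum.inr i)))
    (h1 : ∀ i, ⁅y, x i⁆ = x i)
    (h2 : ∀ i, ⁅y, yi i⁆ = -(yi i))
    (h3 : ∀ i j, ⁅x i, x j⁆ = 0)
    (h4 : ∀ i j, ⁅yi i, yi j⁆ = 0)
    (h5 : ∀ i j, ⁅x i, yi j⁆ = 0)
    (ystar : f →ₗ[ℂ] ℂ) (xstar : Fin n → (f →ₗ[ℂ] ℂ)) (yistar : Fin n → (f →ₗ[ℂ] ℂ))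
    (hys : ystar = b.coord (Sum.inl ()))
    (hxs : ∀ i, xstar i = b.coord (Sum.inr (Sum.inl i)))
    (hyis : ∀ i, yistar i = b.coord (Sum.inr (Sum.inr i))) :
    -- (1) ∂ vanishes on the span of wedge products whose first factor is y*
    (∀ k : ℕ, ∀ ω ∈ Submodule.span ℂ
        {w : AlternatingMap ℂ f ℂ (Fin (k+1)) |
          ∃ ξ : Fin k → (f →ₗ[ℂ] ℂ),
            (∀ m, ξ m ∈ Set.range xstar ∪ Set.range yistar) ∧
            w = wedgeF (Fin.cons ystar ξ)},
      ceDiff f (k+1) ω = 0) ∧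
    -- (2) behaviour on the subspaces W_{j,l}
    (∀ j l : ℕ,
      (j = l → ∀ ω ∈ Submodule.span ℂ
          {w : AlternatingMap ℂ f ℂ (Fin (j+l)) |
            ∃ (s t : Finset (Fin n)) (hs : s.card = j) (ht : t.card = l),
              w = wedgeF (Fin.append
                    (fun m => xstar (s.orderIsoOfFin hs m))
                    (fun m => yistar (t.orderIsoOfFin ht m)))},
        ceDiff f (j+l) ω = 0) ∧
      (j ≠ l →
        Set.InjOn (ceDiff f (j+l))
          (Submodule.span ℂ
            {w : AlternatingMap ℂ f ℂ (Fin (j+l)) |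
              ∃ (s t : Finset (Fin n)) (hs : s.card = j) (ht : t.card = l),
                w = wedgeF (Fin.append
                      (fun m => xstar (s.orderIsoOfFin hs m))
                      (fun m => yistar (t.orderIsoOfFin ht m)))}) ∧
        (ceDiff f (j+l)) '' (Submodule.span ℂ
            {w : AlternatingMap ℂ f ℂ (Fin (j+l)) |
              ∃ (s t : Finset (Fin n)) (hs : s.card = j) (ht : t.card = l),
                w = wedgeF (Fin.append
                      (fun m => xstar (s.orderIsoOfFin hs m))
                      (fun m => yistar (t.orderIsoOfFin ht m)))})
          = (fun φ : AlternatingMap ℂ f ℂ (Fin (j+l+1)) => (φ : (Fin (j+l+1) → f) → ℂ)) ''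
            (Submodule.span ℂ
              {w : AlternatingMap ℂ f ℂ (Fin (j+l+1)) |
                ∃ (s t : Finset (Fin n)) (hs : s.card = j) (ht : t.card = l),
                  w = wedgeF (Fin.cons ystar (Fin.append
                        (fun m => xstar (s.orderIsoOfFin hs m))
                        (fun m => yistar (t.orderIsoOfFin ht m))))}))) := by
  subst hy hys
  let D : f →ₗ[ℂ] f := LieAlgebra.ad ℂ f (b (.inl ()))
  have hcoord := b.coord_apply_of_apply_eq_smul (D := D)
    (μ := Sum.elim (fun _ => 0) (Sum.elim (fun _ => 1) fun _ => -1))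
    (by rintro (⟨⟩ | i | i) <;> simp [D, ← hx, ← hyi, h1, h2])
  have hbr : ∀ u w, ⁅u, w⁆ = b.coord (.inl ()) u • D w - b.coord (.inl ()) w • D u :=
    b.lie_eq_coord_smul_sub <| by
      rintro (i | i) (j | j) <;> simp only [← hx, ← hyi]
      exacts [h3 i j, h5 i j, by rw [← lie_skew, h5, neg_zero], h4 i j]
  have hxD (i : Fin n) (w : f) : xstar i (D w) = xstar i w := by
    simpa [hxs] using hcoord (.inr (.inl i)) w
  have hyiD (i : Fin n) (w : f) : yistar i (D w) = -yistar i w := by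
    simpa [hyis] using hcoord (.inr (.inr i)) w
  refine ⟨fun k ω hω => ?_, fun j l => ⟨?_, fun hjl => ⟨?_, ?_⟩⟩⟩
  · refine LinearMap.mem_ker.1 (Submodule.span_le.2 ?_ hω)
    rintro _ ⟨ξ, hξ, rfl⟩
    refine ceDiff_wedgeF_cons_eq_zero hbr (by simpa using hcoord (.inl ())) fun q => ?_
    rcases hξ q with ⟨i, hi⟩ | ⟨i, hi⟩
    exacts [⟨1, hi ▸ by simpa using hxD i⟩, ⟨-1, hi ▸ by simpa using hyiD i⟩]
  · rintro rfl ω hω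
    refine LinearMap.mem_ker.1 (Submodule.span_le.2 ?_ hω)
    rintro _ ⟨s, t, hs, ht, rfl⟩
    simp [ceDiff_wedgeF_append hbr (fun _ => hxD _) (fun _ => hyiD _)]
  · have hc : (j : ℂ) - l ≠ 0 := sub_ne_zero.2 (by exact_mod_cast hjl)
    refine ceDiff_injOn_span hbr (y := b (.inl ())) (by simp) hc ?_ ?_
    · rintro _ ⟨s, t, hs, ht, rfl⟩
      exact derivAction_wedgeF_append (fun _ => hxD _) (fun _ => hyiD _)
    · rintro _ ⟨s, t, hs, ht, rfl⟩ v m hv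
      refine wedgeF_apply_eq_zero (m := m) fun q => ?_
      refine Fin.addCases (fun q => ?_) (fun q => ?_) q <;> simp [hv, hxs, hyis]
  · have hc : (l : ℂ) - j ≠ 0 := sub_ne_zero.2 (by exact_mod_cast hjl.symm)
    refine LinearMap.image_span_eq_image_span_of_smul _ (AlternatingMap.coeFnLM ℂ f ℂ _) hc ?_ ?_
    all_goals
      rintro _ ⟨s, t, hs, ht, rfl⟩
      exact ⟨_, ⟨s, t, hs, ht, rfl⟩, ceDiff_wedgeF_append hbr (fun _ => hxD _) (fun _ => hyiD _)⟩

/-- Structure of the Chevalley–Eilenberg differential of the Lie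
algebra `f` with basis `{y, x_1, …, x_n, y_1, …, y_n}`, brackets `⁅y, x_i⁆ = x_i`,
`⁅y, y_i⁆ = −y_i`, in terms of the dual basis `{y*, x_i*, y_i*}`:
(1) `∂` vanishes on the span of the monomials starting with `y*`;
(2) `∂` vanishes on `W_{j,l}` when `j = l`, while for `j ≠ l` it is injective on
`W_{j,l}` with image `y* ∧ W_{j,l}`. -/
theorem ceDiff_f_structure (n : ℕ) (hn : 1 ≤ n)
    (f : Type) [LieRing f] [LieAlgebra ℂ f]
    (b : Basis (Unit ⊕ (Fin n ⊕ Fin n)) ℂ f)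
    (y : f) (x : Fin n → f) (yi : Fin n → f)
    (hy : y = b (Sum.inl ())) (hx : ∀ i, x i = b (Sum.inr (Sum.inl i)))
    (hyi : ∀ i, yi i = b (Sum.inr (Sum.inr i)))
    (h1 : ∀ i, ⁅y, x i⁆ = x i)
    (h2 : ∀ i, ⁅y, yi i⁆ = -(yi i))
    (h3 : ∀ i j, ⁅x i, x j⁆ = 0)
    (h4 : ∀ i j, ⁅yi i, yi j⁆ = 0)
    (h5 : ∀ i j, ⁅x i, yi j⁆ = 0)
    (ystar : f →ₗ[ℂ] ℂ) (xstar : Fin n → (f →ₗ[ℂ] ℂ)) (yistar : Fin n → (f →ₗ[ℂ] ℂ))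
    (hys : ystar = b.coord (Sum.inl ()))
    (hxs : ∀ i, xstar i = b.coord (Sum.inr (Sum.inl i)))
    (hyis : ∀ i, yistar i = b.coord (Sum.inr (Sum.inr i))) :
    -- (1) ∂ vanishes on the span of wedge products whose first factor is y*
    (∀ k : ℕ, ∀ ω ∈ Submodule.span ℂ
        {w : AlternatingMap ℂ f ℂ (Fin (k+1)) |
          ∃ ξ : Fin k → (f →ₗ[ℂ] ℂ),
            (∀ m, ξ m ∈ Set.range xstar ∪ Set.range yistar) ∧
            w = wedgeF (Fin.cons ystar ξ)},
      ceDiff f (k+1) ω = 0) ∧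
    -- (2) behaviour on the subspaces W_{j,l}
    (∀ j l : ℕ,
      (j = l → ∀ ω ∈ Submodule.span ℂ
          {w : AlternatingMap ℂ f ℂ (Fin (j+l)) |
            ∃ (s t : Finset (Fin n)) (hs : s.card = j) (ht : t.card = l),
              w = wedgeF (Fin.append
                    (fun m => xstar (s.orderIsoOfFin hs m))
                    (fun m => yistar (t.orderIsoOfFin ht m)))},
        ceDiff f (j+l) ω = 0) ∧
      (j ≠ l →
        Set.InjOn (ceDiff f (j+l))
          (Submodule.span ℂ
            {w : AlternatingMap ℂ f ℂ (Fin (j+l)) |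
              ∃ (s t : Finset (Fin n)) (hs : s.card = j) (ht : t.card = l),
                w = wedgeF (Fin.append
                      (fun m => xstar (s.orderIsoOfFin hs m))
                      (fun m => yistar (t.orderIsoOfFin ht m)))}) ∧
        (ceDiff f (j+l)) '' (Submodule.span ℂ
            {w : AlternatingMap ℂ f ℂ (Fin (j+l)) |
              ∃ (s t : Finset (Fin n)) (hs : s.card = j) (ht : t.card = l),
                w = wedgeF (Fin.append
                      (fun m => xstar (s.orderIsoOfFin hs m))
                      (fun m => yistar (t.orderIsoOfFin ht m)))})
          = (fun φ : AlternatingMap ℂ f ℂ (Fin (j+l+1)) => (φ : (Fin (j+l+1) → f) → ℂ)) ''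
            (Submodule.span ℂ
              {w : AlternatingMap ℂ f ℂ (Fin (j+l+1)) |
                ∃ (s t : Finset (Fin n)) (hs : s.card = j) (ht : t.card = l),
                  w = wedgeF (Fin.cons ystar (Fin.append
                        (fun m => xstar (s.orderIsoOfFin hs m))
                        (fun m => yistar (t.orderIsoOfFin ht m))))}))) :=
  ceDiff_f_structure_general n f b y x yi hy hx hyi h1 h2 h3 h4 h5 ystar xstar yistar hys hxs hyis
end
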